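/- arXiv:2401.06350 — 7 statements merged into one kernel-verified Lean document; each statement's English description precedes it below -/
import Mathlib

section
/- Fix δ, η ∈ (0,1), a constant C' > 0 and L ≥ 1, and let ε_var(k,n) := k/(n·log(1 + k/√n)). Let 1 ≤ k* < n/2 and suppose: (i) σ̃ : ℝⁿ → (0,∞) is Borel measurable and for all θ ∈ ℝ, all γ with ‖γ‖₀ ≤ k* and all σ > 0, P_{θ,γ,σ}{ L^{−1} ≤ σ̃(X)²/σ² ≤ L } ≥ 1 − η; (ii) {σ̂²_k}_{1 ≤ k < n/2} are Borel measurable estimators such that for all θ ∈ ℝ, all γ with ‖γ‖₀ ≤ k* and all σ > 0, P_{θ,γ,σ}{ there exists k with k* ≤ k < n/2 and |σ̂²_k(X) − σ²|/σ² > C'·ε_var(k,n) } ≤ δ. For each 1 ≤ k < n/2 define (as a function of the data) J_k = [σ̂²_k − σ̃²·C'·L·ε_var(k,n), σ̂²_k + σ̃²·C'·L·ε_var(k,n)], and let σ̂² be any measurable function such that, for each data vector, σ̂² ∈ ⋂_{k ≥ k'} J_k where k' is the smallest integer in [1, n/2) making this intersection nonempty (and σ̂² = 1 if no such k' exists). Then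 sup over θ ∈ ℝ, γ with ‖γ‖₀ ≤ k* and σ > 0 of P_{θ,γ,σ}{ |σ̂²(X) − σ²|/σ² > 2·C'·L²·ε_var(k*,n) } ≤ η + δ. -/
open MeasureTheory ProbabilityTheory

/-- The law on ℝⁿ of independent coordinates `X j ~ N(θ + γ j, σ²)`. -/
noncomputable def gaussianVec (n : ℕ) (θ : ℝ) (γ : Fin n → ℝ) (σ : ℝ) :
    Measure (Fin n → ℝ) :=
  Measure.pi fun j => gaussianReal (θ + γ j) (Real.toNNReal (σ ^ 2))

/-- `‖γ‖₀`, the number of nonzero coordinates. -/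
noncomputable def sparsity {n : ℕ} (γ : Fin n → ℝ) : ℕ :=
  (Function.support γ).ncard

/-- The minimax variance rate `ε_var(k, n) = k/(n·log(1 + k/√n))`. -/
noncomputable def epsVar (n k : ℕ) : ℝ :=
  (k : ℝ) / ((n : ℝ) * Real.log (1 + (k : ℝ) / Real.sqrt n))

/-- Membership in the grid `{k : 1 ≤ k < n/2}`. -/
def inKvar (n k : ℕ) : Prop :=
  1 ≤ k ∧ (k : ℝ) < (n : ℝ) / 2

/-- Lepski intersection `⋂_{k ≥ k', 1 ≤ k < n/2} J_k` where
`J_k = [σ̂²_k − σ̃² C' L ε_var(k,n), σ̂²_k + σ̃² C' L ε_var(k,n)]`. -/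
noncomputable def lepskiInterVar (n : ℕ) (C' L : ℝ) (σt : (Fin n → ℝ) → ℝ)
    (σksq : ℕ → (Fin n → ℝ) → ℝ) (k' : ℕ) (x : Fin n → ℝ) : Set ℝ :=
  ⋂ k ∈ {k : ℕ | inKvar n k ∧ k' ≤ k},
    Set.Icc (σksq k x - (σt x) ^ 2 * C' * L * epsVar n k)
            (σksq k x + (σt x) ^ 2 * C' * L * epsVar n k)

/-! On the event where the pilot `σ̃²` is within a factor `L` of `σ²` and every `σ̂²_k` with
`k ≥ k*` meets its risk bound, `σ²` itself lies in the Lepski intersection started at `k*`.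
Hence the selected index satisfies `k' ≤ k*`, so both `σ̂²` and `σ²` lie in `J_{k*}`, whose
length is `2 σ̃² C' L ε_var(k*, n) ≤ 2 C' L² ε_var(k*, n) σ²`. The complement of that event has
probability at most `η + δ`. -/

lemma epsVar_nonneg (n k : ℕ) : 0 ≤ epsVar n k := by
  unfold epsVar
  have : 0 ≤ Real.log (1 + (k : ℝ) / Real.sqrt n) :=
    Real.log_nonneg (le_add_of_nonneg_right (by positivity))
  positivity

section Lepski

variable {n : ℕ} {C' L : ℝ} {σt : (Fin n → ℝ) → ℝ} {σksq : ℕ → (Fin n → ℝ) → ℝ}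
  {x : Fin n → ℝ} {v : ℝ}

lemma mem_lepskiInterVar_iff {k' : ℕ} :
    v ∈ lepskiInterVar n C' L σt σksq k' x ↔
      ∀ k, inKvar n k → k' ≤ k → |σksq k x - v| ≤ σt x ^ 2 * C' * L * epsVar n k := by
  simp only [lepskiInterVar, Set.mem_iInter, Set.mem_ofPred_eq, Set.mem_Icc_iff_abs_le, and_imp]

lemma lepskiInterVar_mono {k₁ k₂ : ℕ} (h : k₁ ≤ k₂) :
    lepskiInterVar n C' L σt σksq k₁ x ⊆ lepskiInterVar n C' L σt σksq k₂ x := fun _ hv =>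
  mem_lepskiInterVar_iff.2 fun k hk hk₂ => mem_lepskiInterVar_iff.1 hv k hk (h.trans hk₂)

lemma abs_sub_le_of_mem_lepskiInterVar {kstar k' : ℕ} (hkstar : inKvar n kstar)
    (hk' : k' ≤ kstar) {u : ℝ} (hu : u ∈ lepskiInterVar n C' L σt σksq k' x)
    (hv : v ∈ lepskiInterVar n C' L σt σksq kstar x) :
    |u - v| ≤ 2 * (σt x ^ 2 * C' * L * epsVar n kstar) := by
  have hu' := mem_lepskiInterVar_iff.1 (lepskiInterVar_mono hk' hu) kstar hkstar le_rfl
  have hv' := mem_lepskiInterVar_iff.1 hv kstar hkstar le_rfl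
  calc |u - v| ≤ |u - σksq kstar x| + |σksq kstar x - v| := abs_sub_le ..
    _ ≤ _ := by rw [abs_sub_comm]; linarith

lemma mem_lepskiInterVar_of_abs_sub_le (hC' : 0 ≤ C') {kstar : ℕ}
    (hpilot : v ≤ L * σt x ^ 2)
    (hrisk : ∀ k, inKvar n k → kstar ≤ k → |σksq k x - v| ≤ C' * epsVar n k * v) :
    v ∈ lepskiInterVar n C' L σt σksq kstar x :=
  mem_lepskiInterVar_iff.2 fun k hk hkk => (hrisk k hk hkk).trans <| by
    have := mul_le_mul_of_nonneg_left hpilot (mul_nonneg hC' (epsVar_nonneg n k))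
    linarith

lemma abs_sub_le_of_lepski_selection (hC' : 0 ≤ C') (hL : 0 ≤ L) {kstar : ℕ}
    (hkstar : inKvar n kstar) {s : ℝ}
    (hsel : (∃ k', inKvar n k' ∧ (lepskiInterVar n C' L σt σksq k' x).Nonempty) →
      ∃ k', inKvar n k' ∧ (lepskiInterVar n C' L σt σksq k' x).Nonempty ∧
        (∀ k'', inKvar n k'' → (lepskiInterVar n C' L σt σksq k'' x).Nonempty → k' ≤ k'') ∧
        s ∈ lepskiInterVar n C' L σt σksq k' x)
    (hpilot : v ≤ L * σt x ^ 2 ∧ σt x ^ 2 ≤ L * v)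
    (hrisk : ∀ k, inKvar n k → kstar ≤ k → |σksq k x - v| ≤ C' * epsVar n k * v) :
    |s - v| ≤ 2 * C' * L ^ 2 * epsVar n kstar * v := by
  have hv := mem_lepskiInterVar_of_abs_sub_le hC' hpilot.1 hrisk
  obtain ⟨k', -, -, hmin, hs⟩ := hsel ⟨kstar, hkstar, v, hv⟩
  have hpilot' := mul_le_mul_of_nonneg_left hpilot.2
    (mul_nonneg (mul_nonneg hC' hL) (epsVar_nonneg n kstar))
  calc |s - v| ≤ 2 * (σt x ^ 2 * C' * L * epsVar n kstar) :=
        abs_sub_le_of_mem_lepskiInterVar hkstar (hmin kstar hkstar ⟨v, hv⟩) hs hv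
    _ ≤ 2 * C' * L ^ 2 * epsVar n kstar * v := by linarith

end Lepski

lemma measure_compl_union_le_ofReal {Ω : Type*} [MeasurableSpace Ω] {μ : Measure Ω}
    [IsProbabilityMeasure μ] {A B : Set Ω} (hA : MeasurableSet A) {η δ : ℝ} (hη : 0 ≤ η)
    (hδ : 0 ≤ δ) (hμA : ENNReal.ofReal (1 - η) ≤ μ A) (hμB : μ B ≤ ENNReal.ofReal δ) :
    μ (Aᶜ ∪ B) ≤ ENNReal.ofReal (η + δ) := by
  have hμAc : μ Aᶜ ≤ ENNReal.ofReal η := by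
    rw [prob_compl_eq_one_sub hA, tsub_le_iff_right]
    calc (1 : ENNReal) = ENNReal.ofReal (η + (1 - η)) := by simp
      _ ≤ ENNReal.ofReal η + ENNReal.ofReal (1 - η) := ENNReal.ofReal_add_le
      _ ≤ ENNReal.ofReal η + μ A := by gcongr
  calc μ (Aᶜ ∪ B) ≤ μ Aᶜ + μ B := measure_union_le _ _
    _ ≤ ENNReal.ofReal η + ENNReal.ofReal δ := add_le_add hμAc hμB
    _ = ENNReal.ofReal (η + δ) := (ENNReal.ofReal_add hη hδ).symm

theorem statement8_general (δ η C' L : ℝ)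
    (hδ : δ ∈ Set.Ioo (0 : ℝ) 1) (hη : η ∈ Set.Ioo (0 : ℝ) 1)
    (hC' : 0 < C') (hL : 1 ≤ L)
    (n kstar : ℕ) (hkstar : inKvar n kstar)
    (σt : (Fin n → ℝ) → ℝ) (hσt : Measurable σt)
    (hpilot : ∀ (θ : ℝ) (γ : Fin n → ℝ), sparsity γ ≤ kstar → ∀ σ : ℝ, 0 < σ →
      ENNReal.ofReal (1 - η) ≤ gaussianVec n θ γ σ
        {x | L⁻¹ ≤ (σt x) ^ 2 / σ ^ 2 ∧ (σt x) ^ 2 / σ ^ 2 ≤ L})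
    (σksq : ℕ → (Fin n → ℝ) → ℝ)
    (hσkrisk : ∀ (θ : ℝ) (γ : Fin n → ℝ), sparsity γ ≤ kstar → ∀ σ : ℝ, 0 < σ →
      gaussianVec n θ γ σ
        {x | ∃ k : ℕ, inKvar n k ∧ kstar ≤ k ∧
          C' * epsVar n k < |σksq k x - σ ^ 2| / σ ^ 2}
        ≤ ENNReal.ofReal δ)
    (σhatsq : (Fin n → ℝ) → ℝ)
    (hsel : ∀ x : Fin n → ℝ,
      (∃ k', inKvar n k' ∧ (lepskiInterVar n C' L σt σksq k' x).Nonempty) →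
        ∃ k', inKvar n k' ∧ (lepskiInterVar n C' L σt σksq k' x).Nonempty ∧
          (∀ k'', inKvar n k'' → (lepskiInterVar n C' L σt σksq k'' x).Nonempty → k' ≤ k'') ∧
          σhatsq x ∈ lepskiInterVar n C' L σt σksq k' x) :
    ∀ (θ : ℝ) (γ : Fin n → ℝ), sparsity γ ≤ kstar → ∀ σ : ℝ, 0 < σ →
      gaussianVec n θ γ σ
        {x | 2 * C' * L ^ 2 * epsVar n kstar < |σhatsq x - σ ^ 2| / σ ^ 2}
        ≤ ENNReal.ofReal (η + δ) := by
  intro θ γ hγ σ hσ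
  have hσ2 : 0 < σ ^ 2 := by positivity
  have : IsProbabilityMeasure (gaussianVec n θ γ σ) := by unfold gaussianVec; infer_instance
  have hA : MeasurableSet {x | L⁻¹ ≤ σt x ^ 2 / σ ^ 2 ∧ σt x ^ 2 / σ ^ 2 ≤ L} := by
    have hf : Measurable fun x => σt x ^ 2 / σ ^ 2 := by fun_prop
    exact (measurableSet_le measurable_const hf).inter (measurableSet_le hf measurable_const)
  refine (measure_mono fun x hx => ?_).trans (measure_compl_union_le_ofReal hA hη.1.le hδ.1.le
    (hpilot θ γ hγ σ hσ) (hσkrisk θ γ hγ σ hσ))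
  by_contra hgood
  rw [Set.mem_union, Set.mem_compl_iff, not_or, not_not] at hgood
  obtain ⟨⟨hpilotLo, hpilotHi⟩, hrisk⟩ := hgood
  simp only [Set.mem_ofPred_eq, not_exists, not_and, not_lt] at hrisk
  have hbound := abs_sub_le_of_lepski_selection hC'.le (by linarith) hkstar (hsel x)
    ⟨(inv_mul_le_iff₀ (by linarith)).1 ((le_div_iff₀ hσ2).1 hpilotLo), (div_le_iff₀ hσ2).1 hpilotHi⟩
    fun k hk hkk => (div_le_iff₀ hσ2).1 (hrisk k hk hkk)
  rw [Set.mem_ofPred_eq, lt_div_iff₀ hσ2] at hx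
  linarith

/-- Theorem (Lepski adaptation to the sparsity level for variance estimation). -/
theorem statement8 (δ η C' L : ℝ)
    (hδ : δ ∈ Set.Ioo (0 : ℝ) 1) (hη : η ∈ Set.Ioo (0 : ℝ) 1)
    (hC' : 0 < C') (hL : 1 ≤ L)
    (n kstar : ℕ) (hkstar : inKvar n kstar)
    (σt : (Fin n → ℝ) → ℝ) (hσt : Measurable σt)
    (hpilot : ∀ (θ : ℝ) (γ : Fin n → ℝ), sparsity γ ≤ kstar → ∀ σ : ℝ, 0 < σ →
      ENNReal.ofReal (1 - η) ≤ gaussianVec n θ γ σ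
        {x | L⁻¹ ≤ (σt x) ^ 2 / σ ^ 2 ∧ (σt x) ^ 2 / σ ^ 2 ≤ L})
    (σksq : ℕ → (Fin n → ℝ) → ℝ) (hσkmeas : ∀ k, Measurable (σksq k))
    (hσkrisk : ∀ (θ : ℝ) (γ : Fin n → ℝ), sparsity γ ≤ kstar → ∀ σ : ℝ, 0 < σ →
      gaussianVec n θ γ σ
        {x | ∃ k : ℕ, inKvar n k ∧ kstar ≤ k ∧
          C' * epsVar n k < |σksq k x - σ ^ 2| / σ ^ 2}
        ≤ ENNReal.ofReal δ)
    (σhatsq : (Fin n → ℝ) → ℝ) (hσhat : Measurable σhatsq)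
    (hsel : ∀ x : Fin n → ℝ,
      (∃ k', inKvar n k' ∧ (lepskiInterVar n C' L σt σksq k' x).Nonempty) →
        ∃ k', inKvar n k' ∧ (lepskiInterVar n C' L σt σksq k' x).Nonempty ∧
          (∀ k'', inKvar n k'' → (lepskiInterVar n C' L σt σksq k'' x).Nonempty → k' ≤ k'') ∧
          σhatsq x ∈ lepskiInterVar n C' L σt σksq k' x)
    (hsel0 : ∀ x : Fin n → ℝ,
      (¬ ∃ k', inKvar n k' ∧ (lepskiInterVar n C' L σt σksq k' x).Nonempty) → σhatsq x = 1) :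
    ∀ (θ : ℝ) (γ : Fin n → ℝ), sparsity γ ≤ kstar → ∀ σ : ℝ, 0 < σ →
      gaussianVec n θ γ σ
        {x | 2 * C' * L ^ 2 * epsVar n kstar < |σhatsq x - σ ^ 2| / σ ^ 2}
        ≤ ENNReal.ofReal (η + δ) :=
  statement8_general δ η C' L hδ hη hC' hL n kstar hkstar σt hσt hpilot σksq hσkrisk σhatsq hsel
end

section
/- Let n ≥ 1 and let k be an integer with 1 ≤ k < n/2. Let θ ∈ ℝ and γ ∈ ℝⁿ with ‖γ‖₀ ≤ k. For μ ∈ ℝ define G(μ) := sup_{ω ∈ ℝ} inf_{ζ ∈ ℂ, |ζ| ≤ 1} | (1/n)·∑_{j=1}^n exp(iω(θ + γ_j − μ)) − (n−k)/n − (k/n)·ζ | (this is the population criterion, since E_{θ,γ,1}[exp(iω(X_j − μ) + ω²/2)] = exp(iω(θ + γ_j − μ))). Then G(θ) = 0 and G(μ) ≥ 2(n−2k)/n > 0 for every μ ≠ θ; in particular, θ is the unique minimizer of G over ℝ. -/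
open MeasureTheory ProbabilityTheory

/-- The population Fourier criterion
`G(μ) = sup_{ω ∈ ℝ} inf_{|ζ| ≤ 1} |(1/n) ∑ⱼ exp(iω(θ + γⱼ − μ)) − (n−k)/n − (k/n)ζ|`. -/
noncomputable def popCrit (n k : ℕ) (θ : ℝ) (γ : Fin n → ℝ) (μ : ℝ) : ℝ :=
  ⨆ ω : ℝ, ⨅ ζ : Metric.closedBall (0 : ℂ) 1,
    ‖((n : ℂ)⁻¹ * ∑ j, Complex.exp (Complex.I * ω * (θ + γ j - μ))
      - ((n : ℂ) - (k : ℂ)) / (n : ℂ) - ((k : ℂ) / (n : ℂ)) * (ζ : ℂ))‖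

lemma absExpI (ω x : ℝ) : ‖Complex.exp (Complex.I * (ω:ℂ) * (x:ℂ))‖ = 1 := by
  rw [show Complex.I * (ω:ℂ) * (x:ℂ) = ((ω*x : ℝ):ℂ) * Complex.I by push_cast; ring]
  exact Complex.norm_exp_ofReal_mul_I _

/-- Lemma: `θ` is the unique minimizer of the population criterion; moreover the
criterion vanishes at `θ` and is at least `2(n−2k)/n > 0` elsewhere. -/
theorem statement9 (n k : ℕ) (hn : 1 ≤ n) (hk1 : 1 ≤ k) (hk2 : (k : ℝ) < (n : ℝ) / 2)
    (θ : ℝ) (γ : Fin n → ℝ) (hγ : sparsity γ ≤ k) :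
    popCrit n k θ γ θ = 0 ∧
    (∀ μ : ℝ, μ ≠ θ → 2 * ((n : ℝ) - 2 * k) / n ≤ popCrit n k θ γ μ) ∧
    0 < 2 * ((n : ℝ) - 2 * k) / n ∧
    (∀ μ : ℝ, (∀ μ' : ℝ, popCrit n k θ γ μ ≤ popCrit n k θ γ μ') → μ = θ) := by
  classical
  have hn0 : (0:ℝ) < n := Nat.cast_pos.mpr hn
  have hk0 : (0:ℝ) < k := Nat.cast_pos.mpr hk1
  have hkn : (k:ℝ) < n := by linarith
  have hnC : (n:ℂ) ≠ 0 := Nat.cast_ne_zero.mpr (by omega)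
  have hkC : (k:ℂ) ≠ 0 := Nat.cast_ne_zero.mpr (by omega)
  haveI : Nonempty (Metric.closedBall (0:ℂ) 1) := ⟨⟨0, by simp⟩⟩
  set S : Finset (Fin n) := Finset.univ.filter (fun j => γ j ≠ 0) with hSdef
  have hsk : (S.card : ℝ) ≤ (k : ℝ) := by
    have h1 : S.card = sparsity γ := by
      rw [sparsity, Set.ncard_eq_toFinset_card']
      congr 1
      ext j
      simp [hSdef, Function.mem_support]
    have h2 : S.card ≤ k := by rw [h1]; exact hγ
    exact_mod_cast h2
  have hs0 : (0:ℝ) ≤ (S.card : ℝ) := Nat.cast_nonneg _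
  have hγ0 : ∀ j, j ∉ S → γ j = 0 := by
    intro j hj
    by_contra h
    exact hj (by simp [hSdef, h])
  have hcardle : S.card ≤ n := by simpa using Finset.card_le_univ S
  -- generic sum splitting
  have hsum : ∀ ω : ℝ, (∑ j, Complex.exp (Complex.I * (ω:ℂ) * ((γ j : ℝ) : ℂ)))
      = (∑ j ∈ S, Complex.exp (Complex.I * (ω:ℂ) * ((γ j : ℝ):ℂ))) + ((n : ℂ) - (S.card : ℂ)) := by
    intro ω
    rw [← Finset.sum_add_sum_compl S]
    congr 1
    have h1 : ∀ j ∈ Sᶜ, Complex.exp (Complex.I * (ω:ℂ) * ((γ j : ℝ):ℂ)) = 1 := by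
      intro j hj
      rw [hγ0 j (Finset.mem_compl.mp hj)]
      simp
    rw [Finset.sum_congr rfl h1, Finset.sum_const, Finset.card_compl, Fintype.card_fin,
      nsmul_eq_mul, mul_one, Nat.cast_sub hcardle]
  have hTle : ∀ ω : ℝ, ‖∑ j ∈ S, Complex.exp (Complex.I * (ω:ℂ) * ((γ j:ℝ):ℂ))‖
      ≤ (S.card : ℝ) := by
    intro ω
    refine le_trans (norm_sum_le _ _) ?_
    have : ∀ j ∈ S, ‖Complex.exp (Complex.I * (ω:ℂ) * ((γ j:ℝ):ℂ))‖ = 1 :=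
      fun j _ => absExpI ω (γ j)
    rw [Finset.sum_congr rfl this, Finset.sum_const, nsmul_eq_mul, mul_one]
  have hbbζ : ∀ (f : Metric.closedBall (0:ℂ) 1 → ℂ),
      BddBelow (Set.range fun ζ => ‖f ζ‖) := by
    intro f
    exact ⟨0, by rintro x ⟨ζ, rfl⟩; exact norm_nonneg _⟩
  -- Part 1 : value at θ is 0
  have part1 : popCrit n k θ γ θ = 0 := by
    rw [popCrit]
    have hinner : ∀ ω : ℝ, (⨅ ζ : Metric.closedBall (0 : ℂ) 1,
        ‖(n : ℂ)⁻¹ * ∑ j, Complex.exp (Complex.I * (ω:ℂ) * ((θ:ℂ) + γ j - θ))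
          - ((n : ℂ) - (k : ℂ)) / (n : ℂ) - ((k : ℂ) / (n : ℂ)) * (ζ : ℂ)‖) = 0 := by
      intro ω
      have hre : (∑ j, Complex.exp (Complex.I * (ω:ℂ) * ((θ:ℂ) + γ j - θ)))
          = ∑ j, Complex.exp (Complex.I * (ω:ℂ) * ((γ j : ℝ):ℂ)) := by
        refine Finset.sum_congr rfl fun j _ => ?_
        ring_nf
      set z : ℂ := (n : ℂ)⁻¹ * ∑ j, Complex.exp (Complex.I * (ω:ℂ) * ((θ:ℂ) + γ j - θ))
          - ((n : ℂ) - (k : ℂ)) / (n : ℂ) with hz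
      have hzval : z = (n:ℂ)⁻¹ * ((∑ j ∈ S, Complex.exp (Complex.I * (ω:ℂ) * ((γ j:ℝ):ℂ)))
          + ((k:ℂ) - (S.card:ℂ))) := by
        rw [hz, hre, hsum ω]
        field_simp
        ring
      have hzabs : ‖z‖ ≤ (k:ℝ)/n := by
        rw [hzval, norm_mul, norm_inv]
        have h2 : ‖(∑ j ∈ S, Complex.exp (Complex.I * (ω:ℂ) * ((γ j:ℝ):ℂ)))
            + ((k:ℂ) - (S.card:ℂ))‖ ≤ (S.card:ℝ) + ((k:ℝ) - S.card) := by
          refine le_trans (norm_add_le _ _) (add_le_add (hTle ω) ?_)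
          rw [show ((k:ℂ) - (S.card:ℂ)) = (((k:ℝ) - S.card : ℝ):ℂ) by push_cast; ring,
            Complex.norm_real, Real.norm_eq_abs, abs_of_nonneg (by linarith)]
        have h1 : ‖((n:ℕ):ℂ)‖ = (n:ℝ) := by
          rw [Complex.norm_natCast]
        rw [h1]
        calc (n:ℝ)⁻¹ * ‖_‖ ≤ (n:ℝ)⁻¹ * ((S.card:ℝ) + ((k:ℝ) - S.card)) := by
              exact mul_le_mul_of_nonneg_left h2 (by positivity)
          _ = (k:ℝ)/n := by ring
      set ζ0 : ℂ := ((n:ℂ)/(k:ℂ)) * z with hζ0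
      have hζ0mem : ζ0 ∈ Metric.closedBall (0:ℂ) 1 := by
        rw [Metric.mem_closedBall, dist_zero_right, hζ0]
        rw [norm_mul, norm_div, Complex.norm_natCast, Complex.norm_natCast]
        calc (n:ℝ)/(k:ℝ) * ‖z‖ ≤ (n:ℝ)/(k:ℝ) * ((k:ℝ)/n) := by
              exact mul_le_mul_of_nonneg_left hzabs (by positivity)
          _ = 1 := by field_simp
      refine le_antisymm ?_ (le_ciInf fun ζ => norm_nonneg _)
      refine ciInf_le_of_le (hbbζ _) (⟨ζ0, hζ0mem⟩ : Metric.closedBall (0:ℂ) 1) ?_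
      have hval : z - ((k:ℂ)/(n:ℂ)) * ζ0 = 0 := by
        rw [hζ0]
        field_simp
        ring
      have : (n : ℂ)⁻¹ * ∑ j, Complex.exp (Complex.I * (ω:ℂ) * ((θ:ℂ) + γ j - θ))
          - ((n : ℂ) - (k : ℂ)) / (n : ℂ) - ((k : ℂ) / (n : ℂ)) * ζ0 = 0 := by
        rw [← hz] at *
        exact hval
      rw [this]
      simp
    simp only [hinner]
    exact ciSup_const
  -- positivity
  have part3 : 0 < 2 * ((n : ℝ) - 2 * k) / n := by
    have : (0:ℝ) < (n:ℝ) - 2*k := by linarith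
    positivity
  -- Part 2
  have part2 : ∀ μ : ℝ, μ ≠ θ → 2 * ((n : ℝ) - 2 * k) / n ≤ popCrit n k θ γ μ := by
    intro μ hμ
    have hδ : θ - μ ≠ 0 := sub_ne_zero.mpr (Ne.symm hμ)
    set ω0 : ℝ := Real.pi / (θ - μ) with hω0
    rw [popCrit]
    have hbdd : BddAbove (Set.range fun ω : ℝ => ⨅ ζ : Metric.closedBall (0 : ℂ) 1,
        ‖(n : ℂ)⁻¹ * ∑ j, Complex.exp (Complex.I * (ω:ℂ) * ((θ:ℂ) + γ j - μ))
          - ((n : ℂ) - (k : ℂ)) / (n : ℂ) - ((k : ℂ) / (n : ℂ)) * (ζ : ℂ)‖) := by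
      refine ⟨2, ?_⟩
      rintro x ⟨ω, rfl⟩
      refine ciInf_le_of_le (hbbζ _) (⟨0, by simp⟩ : Metric.closedBall (0:ℂ) 1) ?_
      have hA : ‖(n:ℂ)⁻¹ * ∑ j, Complex.exp (Complex.I * (ω:ℂ) * ((θ:ℂ) + γ j - μ))‖ ≤ 1 := by
        rw [norm_mul, norm_inv, Complex.norm_natCast]
        have h2 : ‖∑ j, Complex.exp (Complex.I * (ω:ℂ) * ((θ:ℂ) + γ j - μ))‖ ≤ (n:ℝ) := by
          refine le_trans (norm_sum_le _ _) ?_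
          have : ∀ j ∈ Finset.univ, ‖Complex.exp (Complex.I * (ω:ℂ) * ((θ:ℂ) + γ j - μ))‖ = 1 := by
            intro j _
            rw [show ((θ:ℂ) + γ j - μ) = ((θ + γ j - μ : ℝ):ℂ) by push_cast; ring]
            exact absExpI ω _
          rw [Finset.sum_congr rfl this, Finset.sum_const, nsmul_eq_mul, mul_one,
            Finset.card_univ, Fintype.card_fin]
        calc (n:ℝ)⁻¹ * ‖_‖ ≤ (n:ℝ)⁻¹ * n := mul_le_mul_of_nonneg_left h2 (by positivity)
          _ = 1 := by field_simp
      have hB : ‖((n:ℂ) - (k:ℂ))/(n:ℂ)‖ ≤ 1 := by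
        rw [show ((n:ℂ) - (k:ℂ))/(n:ℂ) = ((((n:ℝ) - k)/(n:ℝ) : ℝ):ℂ) by push_cast; ring,
          Complex.norm_real, Real.norm_eq_abs, abs_of_nonneg (div_nonneg (by linarith) hn0.le)]
        rw [div_le_one hn0]
        linarith
      calc ‖(n:ℂ)⁻¹ * ∑ j, Complex.exp (Complex.I * (ω:ℂ) * ((θ:ℂ) + γ j - μ))
            - ((n : ℂ) - (k : ℂ)) / (n : ℂ) - ((k : ℂ) / (n : ℂ)) * ((⟨0, by simp⟩ : Metric.closedBall (0:ℂ) 1) : ℂ)‖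
          = ‖(n:ℂ)⁻¹ * ∑ j, Complex.exp (Complex.I * (ω:ℂ) * ((θ:ℂ) + γ j - μ))
            - ((n : ℂ) - (k : ℂ)) / (n : ℂ)‖ := by norm_num
        _ ≤ _ + _ := by
            rw [sub_eq_add_neg]
            exact le_trans (norm_add_le _ _) (le_of_eq (by rw [norm_neg]))
        _ ≤ 1 + 1 := add_le_add hA hB
        _ = 2 := by norm_num
    -- key lower bound at ω0
    have key : 2 * ((n : ℝ) - 2 * k) / n ≤ ⨅ ζ : Metric.closedBall (0 : ℂ) 1,
        ‖(n : ℂ)⁻¹ * ∑ j, Complex.exp (Complex.I * (ω0:ℂ) * ((θ:ℂ) + γ j - μ))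
          - ((n : ℂ) - (k : ℂ)) / (n : ℂ) - ((k : ℂ) / (n : ℂ)) * (ζ : ℂ)‖ := by
      refine le_ciInf fun ζ => ?_
      have hterm : ∀ j : Fin n, Complex.I * (ω0:ℂ) * ((θ:ℂ) + γ j - μ)
          = (Real.pi:ℂ) * Complex.I + Complex.I * (ω0:ℂ) * ((γ j : ℝ):ℂ) := by
        intro j
        have h1 : ω0 * (θ + γ j - μ) = Real.pi + ω0 * γ j := by
          have h2 : θ + γ j - μ = (θ - μ) + γ j := by ring
          rw [h2, mul_add, hω0, div_mul_cancel₀ _ hδ]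
        calc Complex.I * (ω0:ℂ) * ((θ:ℂ) + γ j - μ)
            = ((ω0 * (θ + γ j - μ) : ℝ):ℂ) * Complex.I := by push_cast; ring
          _ = ((Real.pi + ω0 * γ j : ℝ):ℂ) * Complex.I := by rw [h1]
          _ = (Real.pi:ℂ) * Complex.I + Complex.I * (ω0:ℂ) * ((γ j : ℝ):ℂ) := by push_cast; ring
      have hsum0 : (∑ j, Complex.exp (Complex.I * (ω0:ℂ) * ((θ:ℂ) + γ j - μ)))
          = -((∑ j ∈ S, Complex.exp (Complex.I * (ω0:ℂ) * ((γ j:ℝ):ℂ))) + ((n:ℂ) - (S.card:ℂ))) := by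
        calc (∑ j, Complex.exp (Complex.I * (ω0:ℂ) * ((θ:ℂ) + γ j - μ)))
            = ∑ j, -Complex.exp (Complex.I * (ω0:ℂ) * ((γ j:ℝ):ℂ)) := by
              refine Finset.sum_congr rfl fun j _ => ?_
              rw [hterm j, Complex.exp_add, Complex.exp_pi_mul_I]
              ring
          _ = -∑ j, Complex.exp (Complex.I * (ω0:ℂ) * ((γ j:ℝ):ℂ)) := by
              rw [Finset.sum_neg_distrib]
          _ = _ := by rw [hsum ω0]
      set T : ℂ := ∑ j ∈ S, Complex.exp (Complex.I * (ω0:ℂ) * ((γ j:ℝ):ℂ)) with hT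
      set c : ℂ := ((2*(n:ℝ) - S.card - k : ℝ):ℂ)/(n:ℂ) with hc
      set w : ℂ := (n:ℂ)⁻¹ * T + ((k:ℂ)/(n:ℂ)) * (ζ:ℂ) with hw
      have hE : (n : ℂ)⁻¹ * ∑ j, Complex.exp (Complex.I * (ω0:ℂ) * ((θ:ℂ) + γ j - μ))
          - ((n : ℂ) - (k : ℂ)) / (n : ℂ) - ((k : ℂ) / (n : ℂ)) * (ζ:ℂ) = -(c + w) := by
        rw [hsum0, hc, hw]
        push_cast
        field_simp
        ring
      rw [hE, norm_neg]
      have hcnorm : ‖c‖ = (2*(n:ℝ) - S.card - k)/n := by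
        rw [hc, show (((2*(n:ℝ) - S.card - k : ℝ)):ℂ)/(n:ℂ) = (((2*(n:ℝ) - S.card - k)/n : ℝ):ℂ) by push_cast; ring,
          Complex.norm_real, Real.norm_eq_abs, abs_of_nonneg (div_nonneg (by linarith) hn0.le)]
      have hwnorm : ‖w‖ ≤ (S.card:ℝ)/n + (k:ℝ)/n := by
        rw [hw]
        refine le_trans (norm_add_le _ _) (add_le_add ?_ ?_)
        · rw [norm_mul, norm_inv, Complex.norm_natCast]
          calc (n:ℝ)⁻¹ * ‖T‖ ≤ (n:ℝ)⁻¹ * S.card :=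
              mul_le_mul_of_nonneg_left (hTle ω0) (by positivity)
            _ = (S.card:ℝ)/n := by ring
        · rw [norm_mul, norm_div, Complex.norm_natCast, Complex.norm_natCast]
          have hζ1 : ‖(ζ:ℂ)‖ ≤ 1 := by
            have := ζ.2
            rw [Metric.mem_closedBall, dist_zero_right] at this
            exact this
          calc (k:ℝ)/n * ‖(ζ:ℂ)‖ ≤ (k:ℝ)/n * 1 :=
              mul_le_mul_of_nonneg_left hζ1 (by positivity)
            _ = (k:ℝ)/n := by ring
      have h4 : ‖c‖ - ‖w‖ ≤ ‖c + w‖ := by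
        simpa [sub_neg_eq_add] using norm_sub_norm_le c (-w)
      have hfinal : 2 * ((n:ℝ) - 2*k)/n ≤ (2*(n:ℝ) - S.card - k)/n - ((S.card:ℝ)/n + (k:ℝ)/n) := by
        rw [show (2*(n:ℝ) - S.card - k)/n - ((S.card:ℝ)/n + (k:ℝ)/n)
            = (2*(n:ℝ) - 2*S.card - 2*k)/n by ring]
        gcongr
        linarith
      linarith [hcnorm, hwnorm, h4, hfinal]
    exact le_trans key (le_ciSup hbdd ω0)
  refine ⟨part1, part2, part3, ?_⟩
  intro μ hμall
  by_contra hne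
  have h2 := part2 μ hne
  have h1 := hμall θ
  rw [part1] at h1
  linarith
end

section
/- Let k ≥ 1 and γ_1, …, γ_k ∈ ℝ, and define f : ℝ → ℝ by f(ω) = (1/k)·∑_{j=1}^k cos(ω·γ_j). Then for every α > 0, sup_{ω ∈ [α, 100α]} f(ω) ≥ −1/5. -/
/-!
The Fejér kernel of order six, `1 + 5 ∑_{n=1}^{5} (6 - n)/15 · cos (n x)`, is nonnegative; here it
equals `(1 + cos x) (4 cos² x - 1)² / 3`. Averaging over `i` the values at `x = α γᵢ` shows that the
weighted mean of `f(α), f(2α), …, f(5α)` with the weights `(6 - n)/15` is at least `-1/5`, and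
the supremum over `[α, 100α]` dominates this weighted mean.
-/

open Finset Real

lemma cos_add_two_mul_chebyshev (t x : ℝ) :
    cos ((t + 2) * x) = 2 * cos x * cos ((t + 1) * x) - cos (t * x) := by
  have hadd : cos ((t + 2) * x) = cos ((t + 1) * x + x) := by ring_nf
  have hsub : cos (t * x) = cos ((t + 1) * x - x) := by ring_nf
  rw [hadd, hsub, cos_add, cos_sub]
  ring

-- the weight of the frequency `j + 1`
noncomputable def fejerWeight (j : ℕ) : ℝ := (5 - j) / 15

lemma sum_fejerWeight : ∑ j ∈ range 5, fejerWeight j = 1 := by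
  norm_num [sum_range_succ, fejerWeight]

lemma fejerWeight_nonneg {j : ℕ} (hj : j ∈ range 5) : 0 ≤ fejerWeight j := by
  have : (j : ℝ) ≤ 5 := by exact_mod_cast (mem_range.mp hj).le
  unfold fejerWeight
  linarith

lemma neg_one_fifth_le_sum_fejerWeight_mul_cos (x : ℝ) :
    -(1 / 5 : ℝ) ≤ ∑ j ∈ range 5, fejerWeight j * cos ((j + 1) * x) := by
  have h2 := cos_add_two_mul_chebyshev 0 x
  have h3 := cos_add_two_mul_chebyshev 1 x
  have h4 := cos_add_two_mul_chebyshev 2 x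
  have h5 := cos_add_two_mul_chebyshev 3 x
  norm_num at h2 h3 h4 h5
  have hfejer : 1 + 5 * ∑ j ∈ range 5, fejerWeight j * cos ((j + 1) * x)
      = (1 + cos x) * (4 * cos x ^ 2 - 1) ^ 2 / 3 := by
    norm_num [sum_range_succ, fejerWeight]
    rw [h5, h4, h3, h2]
    ring
  have : 0 ≤ (1 + cos x) * (4 * cos x ^ 2 - 1) ^ 2 :=
    mul_nonneg (by linarith [neg_one_le_cos x]) (sq_nonneg _)
  linarith

lemma sum_mul_le_ciSup_of_mem {ι β : Type*} {s : Finset ι} {w : ι → ℝ} {S : Set β} {f : β → ℝ}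
    {p : ι → β} (hf : BddAbove (f '' S)) (hw : ∀ i ∈ s, 0 ≤ w i) (hw₁ : ∑ i ∈ s, w i = 1)
    (hp : ∀ i ∈ s, p i ∈ S) :
    ∑ i ∈ s, w i * f (p i) ≤ ⨆ x : S, f x := by
  have hbdd : BddAbove (Set.range fun x : S => f x) := by rwa [← Set.image_eq_range]
  calc ∑ i ∈ s, w i * f (p i) ≤ ∑ i ∈ s, w i * ⨆ x : S, f x :=
        sum_le_sum fun i hi => mul_le_mul_of_nonneg_left (le_ciSup hbdd ⟨p i, hp i hi⟩) (hw i hi)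
    _ = ⨆ x : S, f x := by rw [← sum_mul, hw₁, one_mul]

lemma le_inv_mul_sum_of_forall_le {k : ℕ} (hk : k ≠ 0) {g : Fin k → ℝ} {m : ℝ}
    (hg : ∀ i, m ≤ g i) : m ≤ (k : ℝ)⁻¹ * ∑ i, g i := by
  have hsum : k • m ≤ ∑ i, g i := by
    simpa using card_nsmul_le_sum univ g m fun i _ => hg i
  rw [nsmul_eq_mul] at hsum
  rwa [le_inv_mul_iff₀ (by positivity)]

lemma neg_one_fifth_le_sum_fejerWeight_mul_mean_cos {k : ℕ} (hk : k ≠ 0) (γ : Fin k → ℝ)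
    (α : ℝ) :
    -(1 / 5 : ℝ) ≤ ∑ j ∈ range 5, fejerWeight j * ((k : ℝ)⁻¹ * ∑ i, cos ((j + 1) * α * γ i)) := by
  have hswap : ∑ j ∈ range 5, fejerWeight j * ((k : ℝ)⁻¹ * ∑ i, cos ((j + 1) * α * γ i))
      = (k : ℝ)⁻¹ * ∑ i, ∑ j ∈ range 5, fejerWeight j * cos ((j + 1) * (α * γ i)) := by
    simp only [mul_sum, mul_assoc]
    rw [sum_comm]
    simp only [mul_left_comm]
  rw [hswap]
  exact le_inv_mul_sum_of_forall_le hk fun i => neg_one_fifth_le_sum_fejerWeight_mul_cos _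

/-- Proposition: for arbitrary reals `γ₁, …, γ_k` and any `α > 0`,
`sup_{ω ∈ [α, 100α]} (1/k) ∑ⱼ cos(ω γⱼ) ≥ −1/5`. -/
theorem statement10 (k : ℕ) (hk : 1 ≤ k) (γ : Fin k → ℝ) (α : ℝ) (hα : 0 < α) :
    -(1 / 5 : ℝ) ≤ ⨆ ω : Set.Icc α (100 * α), (k : ℝ)⁻¹ * ∑ j, Real.cos ((ω : ℝ) * γ j) := by
  set f : ℝ → ℝ := fun ω => (k : ℝ)⁻¹ * ∑ j, cos (ω * γ j)
  have hf : BddAbove (f '' Set.Icc α (100 * α)) :=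
    isCompact_Icc.bddAbove_image (by fun_prop)
  have hmem : ∀ j ∈ range 5, ((j : ℝ) + 1) * α ∈ Set.Icc α (100 * α) := by
    intro j hj
    have : (j : ℝ) < 5 := by exact_mod_cast mem_range.mp hj
    constructor <;> nlinarith
  calc -(1 / 5 : ℝ) ≤ ∑ j ∈ range 5, fejerWeight j * f ((j + 1) * α) :=
        neg_one_fifth_le_sum_fejerWeight_mul_mean_cos (by omega) γ α
    _ ≤ ⨆ ω : Set.Icc α (100 * α), f ω :=
        sum_mul_le_ciSup_of_mem hf (fun _ => fejerWeight_nonneg) sum_fejerWeight hmem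
end

section
/- There exists a universal constant C > 0 such that for every τ > 0, every integer n ≥ 0 and every x ≠ 0, | ∫_0^τ (t^{2n+1}/τ^{2n+1})·sin(tx) dt + cos(τx)/x | ≤ C·max(1, n)/(τ·x²). -/
lemma key13 (x τ : ℝ) (hx : x ≠ 0) (m : ℕ) (hm : 1 ≤ m) :
    ∫ t in (0:ℝ)..τ, t ^ m * Real.sin (t * x)
      = -(τ ^ m * Real.cos (τ * x)) / x + (m : ℝ) * τ ^ (m - 1) * Real.sin (τ * x) / x ^ 2
        - ((m : ℝ) * ((m - 1 : ℕ) : ℝ) / x ^ 2) *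
            ∫ t in (0:ℝ)..τ, t ^ (m - 2) * Real.sin (t * x) := by
  set H : ℝ → ℝ := fun t =>
    -(t ^ m * Real.cos (t * x)) / x + (m : ℝ) * t ^ (m - 1) * Real.sin (t * x) / x ^ 2 with hH
  have hderiv : ∀ t ∈ Set.uIcc (0:ℝ) τ,
      HasDerivAt H (t ^ m * Real.sin (t * x)
        + ((m : ℝ) * ((m - 1 : ℕ) : ℝ) / x ^ 2) * (t ^ (m - 2) * Real.sin (t * x))) t := by
    intro t _
    have hs : HasDerivAt (fun t : ℝ => Real.sin (t * x)) (Real.cos (t * x) * x) t :=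
      (hasDerivAt_mul_const x).sin
    have hc : HasDerivAt (fun t : ℝ => Real.cos (t * x)) (-Real.sin (t * x) * x) t :=
      (hasDerivAt_mul_const x).cos
    have hp : HasDerivAt (fun t : ℝ => t ^ m) ((m : ℝ) * t ^ (m - 1)) t := hasDerivAt_pow m t
    have hp1 : HasDerivAt (fun t : ℝ => (m : ℝ) * t ^ (m - 1))
        ((m : ℝ) * (((m - 1 : ℕ) : ℝ) * t ^ (m - 2))) t := by
      have := (hasDerivAt_pow (m - 1) t).const_mul (m : ℝ)
      simpa [Nat.sub_sub] using this
    have h1 := ((hp.mul hc).neg).div_const x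
    have h2 := (hp1.mul hs).div_const (x ^ 2)
    have := h1.add h2
    refine this.congr_deriv ?_
    field_simp
    ring
  have hcont2 : Continuous fun t : ℝ => t ^ (m - 2) * Real.sin (t * x) := by fun_prop
  have hint2 : IntervalIntegrable (fun t : ℝ => t ^ (m - 2) * Real.sin (t * x))
      MeasureTheory.volume 0 τ := hcont2.intervalIntegrable 0 τ
  have hint1 : IntervalIntegrable (fun t : ℝ => t ^ m * Real.sin (t * x))
      MeasureTheory.volume 0 τ := by
    exact (by fun_prop : Continuous fun t : ℝ => t ^ m * Real.sin (t * x)).intervalIntegrable 0 τ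
  have heq := intervalIntegral.integral_eq_sub_of_hasDerivAt hderiv
    (by exact (hint1.add ((hint2.const_mul _))))
  rw [intervalIntegral.integral_add hint1 (hint2.const_mul _),
    intervalIntegral.integral_const_mul] at heq
  have hH0 : H 0 = 0 := by
    simp [hH, zero_pow (by omega : m ≠ 0)]
  rw [hH0, sub_zero] at heq
  have hHτ : H τ = -(τ ^ m * Real.cos (τ * x)) / x
      + (m : ℝ) * τ ^ (m - 1) * Real.sin (τ * x) / x ^ 2 := rfl
  linarith [heq]
lemma bnd13 (x τ : ℝ) (hτ : 0 < τ) (m : ℕ) (hm : 1 ≤ m) :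
    (m : ℝ) * ((m - 1 : ℕ) : ℝ) * |∫ t in (0:ℝ)..τ, t ^ (m - 2) * Real.sin (t * x)|
      ≤ (m : ℝ) * τ ^ (m - 1) := by
  rcases eq_or_lt_of_le hm with h1 | h2
  · have : m = 1 := h1.symm
    subst this
    simp
  · have hm2 : 2 ≤ m := h2
    have habs : |∫ t in (0:ℝ)..τ, t ^ (m - 2) * Real.sin (t * x)|
        ≤ ∫ t in (0:ℝ)..τ, |t ^ (m - 2) * Real.sin (t * x)| :=
      intervalIntegral.abs_integral_le_integral_abs hτ.le
    have hmono : (∫ t in (0:ℝ)..τ, |t ^ (m - 2) * Real.sin (t * x)|)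
        ≤ ∫ t in (0:ℝ)..τ, t ^ (m - 2) := by
      apply intervalIntegral.integral_mono_on hτ.le
      · exact ((by fun_prop : Continuous fun t : ℝ => t ^ (m-2) * Real.sin (t*x)).abs).intervalIntegrable 0 τ
      · exact (continuous_pow _).intervalIntegrable 0 τ
      · intro t ht
        rw [abs_mul, abs_pow]
        calc |t| ^ (m-2) * |Real.sin (t*x)| ≤ |t| ^ (m-2) * 1 := by
              exact mul_le_mul_of_nonneg_left (Real.abs_sin_le_one _) (by positivity)
          _ = |t| ^ (m-2) := mul_one _
          _ = t ^ (m-2) := by rw [abs_of_nonneg ht.1]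
    have hpow : (∫ t in (0:ℝ)..τ, t ^ (m - 2)) = τ ^ (m - 1) / ((m : ℝ) - 1) := by
      rw [integral_pow]
      have : m - 2 + 1 = m - 1 := by omega
      rw [this]
      have : ((m - 2 : ℕ) : ℝ) + 1 = (m : ℝ) - 1 := by
        have : (m - 2 : ℕ) = m - 2 := rfl
        push_cast [Nat.cast_sub hm2]
        ring
      rw [this, zero_pow (by omega : m - 1 ≠ 0), sub_zero]
    have hm1 : ((m - 1 : ℕ) : ℝ) = (m : ℝ) - 1 := by push_cast [Nat.cast_sub hm]; ring
    have hmpos : (0:ℝ) < (m:ℝ) - 1 := by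
      have : (2:ℝ) ≤ (m:ℝ) := by exact_mod_cast hm2
      linarith
    calc (m : ℝ) * ((m - 1 : ℕ) : ℝ) * |∫ t in (0:ℝ)..τ, t ^ (m - 2) * Real.sin (t * x)|
        ≤ (m : ℝ) * ((m:ℝ) - 1) * (τ ^ (m - 1) / ((m : ℝ) - 1)) := by
          rw [hm1]
          apply mul_le_mul_of_nonneg_left _ (by positivity)
          rw [← hpow]
          exact habs.trans hmono
      _ = (m : ℝ) * τ ^ (m - 1) := by field_simp

/-- Lemma: `|∫₀^τ (t^{2n+1}/τ^{2n+1}) sin(tx) dt + cos(τx)/x| ≤ C·max(1,n)/(τx²)`. -/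
theorem statement13 :
    ∃ C : ℝ, 0 < C ∧
      ∀ τ : ℝ, 0 < τ → ∀ n : ℕ, ∀ x : ℝ, x ≠ 0 →
        |(∫ t in (0 : ℝ)..τ, t ^ (2 * n + 1) / τ ^ (2 * n + 1) * Real.sin (t * x))
            + Real.cos (τ * x) / x|
          ≤ C * max 1 (n : ℝ) / (τ * x ^ 2) := by
  refine ⟨6, by norm_num, ?_⟩
  intro τ hτ n x hx
  set m : ℕ := 2 * n + 1 with hmdef
  have hm : 1 ≤ m := by omega
  have hτ0 : τ ≠ 0 := hτ.ne'
  have hrw : (∫ t in (0:ℝ)..τ, t ^ m / τ ^ m * Real.sin (t * x))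
      = (∫ t in (0:ℝ)..τ, t ^ m * Real.sin (t * x)) / τ ^ m := by
    rw [← intervalIntegral.integral_div]
    apply intervalIntegral.integral_congr
    intro t _
    ring
  rw [hrw, key13 x τ hx m hm]
  have hpowm : τ ^ m = τ ^ (m - 1) * τ := by
    rw [← pow_succ]
    rfl
  rw [hpowm]
  set B := ∫ t in (0:ℝ)..τ, t ^ (m - 2) * Real.sin (t * x) with hB
  set P := τ ^ (m - 1) with hP
  have hPpos : 0 < P := pow_pos hτ _
  set M : ℝ := (m : ℝ) with hM
  set M1 : ℝ := ((m - 1 : ℕ) : ℝ) with hM1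
  have hexp : (-(P * τ * Real.cos (τ * x)) / x + M * P * Real.sin (τ * x) / x ^ 2
        - (M * M1 / x ^ 2) * B) / (P * τ) + Real.cos (τ * x) / x
      = M * Real.sin (τ * x) / (τ * x ^ 2) - (M * M1 * B) / (x ^ 2 * (P * τ)) := by
    field_simp
    ring
  rw [hexp]
  have hbnd := bnd13 x τ hτ m hm
  rw [← hB, ← hM, ← hM1, ← hP] at hbnd
  have hMpos : 0 < M := by rw [hM]; exact_mod_cast Nat.pos_of_ne_zero (by omega)
  have h1 : |M * Real.sin (τ * x) / (τ * x ^ 2)| ≤ M / (τ * x ^ 2) := by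
    rw [abs_div, abs_of_pos (by positivity : (0:ℝ) < τ * x ^ 2), abs_mul,
      abs_of_pos hMpos, div_le_div_iff_of_pos_right (by positivity)]
    exact mul_le_of_le_one_right hMpos.le (Real.abs_sin_le_one _)
  have h2 : |(M * M1 * B) / (x ^ 2 * (P * τ))| ≤ M / (τ * x ^ 2) := by
    rw [abs_div, abs_of_pos (by positivity : (0:ℝ) < x ^ 2 * (P * τ))]
    rw [div_le_div_iff₀ (by positivity) (by positivity)]
    calc |M * M1 * B| * (τ * x ^ 2) = (M * M1 * |B|) * (τ * x ^ 2) := by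
          rw [abs_mul, abs_of_nonneg (by positivity : (0:ℝ) ≤ M * M1)]
      _ ≤ (M * P) * (τ * x ^ 2) := by
          apply mul_le_mul_of_nonneg_right hbnd (by positivity)
      _ = M * (x ^ 2 * (P * τ)) := by ring
  have h3 : 2 * M ≤ 6 * max 1 (n : ℝ) := by
    rw [hM, hmdef]
    rcases Nat.eq_zero_or_pos n with h | h
    · subst h; norm_num
    · have hn1 : (1:ℝ) ≤ (n:ℝ) := by exact_mod_cast h
      rw [max_eq_right hn1]
      push_cast
      linarith
  calc |M * Real.sin (τ * x) / (τ * x ^ 2) - (M * M1 * B) / (x ^ 2 * (P * τ))|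
      ≤ |M * Real.sin (τ * x) / (τ * x ^ 2)| + |(M * M1 * B) / (x ^ 2 * (P * τ))| :=
        abs_sub _ _
    _ ≤ M / (τ * x ^ 2) + M / (τ * x ^ 2) := add_le_add h1 h2
    _ = 2 * M / (τ * x ^ 2) := by ring
    _ ≤ 6 * max 1 (n : ℝ) / (τ * x ^ 2) := by
        apply div_le_div_of_nonneg_right h3 (by positivity)
end

section
/- For every integer s ≥ 0, the series ∑_{k=0}^∞ (max(1, k^s)/(2^k · k!)) · ( ∑_{ℓ=0}^{k} C(k,ℓ)·√(ℓ!) )² converges (is finite). In particular (the case s = 0), ∑_{k=0}^∞ (1/(2^k · k!)) · ( ∑_{ℓ=0}^{k} C(k,ℓ)·√(ℓ!) )² < ∞. -/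
open Finset Real

lemma key (k : ℕ) :
    (∑ ℓ ∈ Finset.range (k + 1), (Nat.choose k ℓ : ℝ) * Real.sqrt (Nat.factorial ℓ)) ^ 2
      ≤ Real.exp 3 * (Nat.factorial k : ℝ) * (4 / 3) ^ k := by
  set f : ℕ → ℝ := fun ℓ => Real.sqrt ((Nat.choose k ℓ : ℝ) * 3 ^ ℓ)
  set g : ℕ → ℝ := fun ℓ => Real.sqrt ((Nat.choose k ℓ : ℝ) * (Nat.factorial ℓ : ℝ) / 3 ^ ℓ)
  have hfg : ∀ ℓ, (Nat.choose k ℓ : ℝ) * Real.sqrt (Nat.factorial ℓ) = f ℓ * g ℓ := by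
    intro ℓ
    simp only [f, g]
    rw [← Real.sqrt_mul (by positivity)]
    have : (Nat.choose k ℓ : ℝ) * 3 ^ ℓ * ((Nat.choose k ℓ : ℝ) * (Nat.factorial ℓ : ℝ) / 3 ^ ℓ)
        = ((Nat.choose k ℓ : ℝ)) ^ 2 * (Nat.factorial ℓ : ℝ) := by
      field_simp
    rw [this, Real.sqrt_mul (by positivity), Real.sqrt_sq (by positivity)]
  have hf2 : ∑ ℓ ∈ Finset.range (k + 1), f ℓ ^ 2 = 4 ^ k := by
    have : ((3 : ℝ) + 1) ^ k = ∑ ℓ ∈ Finset.range (k + 1),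
        (3 : ℝ) ^ ℓ * 1 ^ (k - ℓ) * (Nat.choose k ℓ : ℝ) := add_pow 3 1 k
    calc ∑ ℓ ∈ Finset.range (k + 1), f ℓ ^ 2
        = ∑ ℓ ∈ Finset.range (k + 1), (3 : ℝ) ^ ℓ * 1 ^ (k - ℓ) * (Nat.choose k ℓ : ℝ) := by
          refine Finset.sum_congr rfl fun ℓ _ => ?_
          simp only [f]
          rw [Real.sq_sqrt (by positivity)]
          ring
      _ = ((3 : ℝ) + 1) ^ k := this.symm
      _ = 4 ^ k := by norm_num
  have hg2 : ∑ ℓ ∈ Finset.range (k + 1), g ℓ ^ 2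
      ≤ (Nat.factorial k : ℝ) / 3 ^ k * Real.exp 3 := by
    have heq : ∑ ℓ ∈ Finset.range (k + 1), g ℓ ^ 2
        = ∑ ℓ ∈ Finset.range (k + 1), (Nat.factorial k : ℝ) / ((Nat.factorial (k - ℓ) : ℝ) * 3 ^ ℓ) := by
      refine Finset.sum_congr rfl fun ℓ hℓ => ?_
      have hℓk : ℓ ≤ k := Nat.lt_succ_iff.mp (Finset.mem_range.mp hℓ)
      simp only [g]
      rw [Real.sq_sqrt (by positivity)]
      have hfact : (Nat.choose k ℓ : ℝ) * (Nat.factorial ℓ : ℝ) * (Nat.factorial (k - ℓ) : ℝ)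
          = (Nat.factorial k : ℝ) := by
        exact_mod_cast congrArg (Nat.cast (R := ℝ))
          (Nat.choose_mul_factorial_mul_factorial hℓk)
      rw [← hfact]
      field_simp
    rw [heq, ← Finset.sum_range_reflect]
    simp only [Nat.add_sub_cancel]
    have : ∀ j ∈ Finset.range (k + 1),
        (Nat.factorial k : ℝ) / ((Nat.factorial (k - (k - j)) : ℝ) * 3 ^ (k - j))
        = (Nat.factorial k : ℝ) / 3 ^ k * ((3 : ℝ) ^ j / (Nat.factorial j : ℝ)) := by
      intro j hj
      have hjk : j ≤ k := Nat.lt_succ_iff.mp (Finset.mem_range.mp hj)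
      rw [Nat.sub_sub_self hjk]
      have h3 : (3:ℝ) ^ (k - j) * 3 ^ j = 3 ^ k := by
        rw [← pow_add]; congr 1; omega
      rw [div_mul_div_comm, div_eq_div_iff (by positivity) (by positivity)]
      linear_combination (-(Nat.factorial k : ℝ) * (Nat.factorial j : ℝ)) * h3
    rw [Finset.sum_congr rfl this, ← Finset.mul_sum]
    have hexp := Real.sum_le_exp_of_nonneg (x := 3) (by norm_num) (k + 1)
    have h0 : (0:ℝ) ≤ (Nat.factorial k : ℝ) / 3 ^ k := by positivity
    exact mul_le_mul_of_nonneg_left hexp h0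
  calc (∑ ℓ ∈ Finset.range (k + 1), (Nat.choose k ℓ : ℝ) * Real.sqrt (Nat.factorial ℓ)) ^ 2
      = (∑ ℓ ∈ Finset.range (k + 1), f ℓ * g ℓ) ^ 2 := by rw [Finset.sum_congr rfl fun ℓ _ => hfg ℓ]
    _ ≤ (∑ ℓ ∈ Finset.range (k + 1), f ℓ ^ 2) * ∑ ℓ ∈ Finset.range (k + 1), g ℓ ^ 2 :=
        Finset.sum_mul_sq_le_sq_mul_sq _ f g
    _ ≤ 4 ^ k * ((Nat.factorial k : ℝ) / 3 ^ k * Real.exp 3) := by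
        rw [hf2]; exact mul_le_mul_of_nonneg_left hg2 (by positivity)
    _ = Real.exp 3 * (Nat.factorial k : ℝ) * (4 / 3) ^ k := by
        rw [div_pow]; field_simp

/-- Lemma: for every `s ≥ 0`, `∑ₖ (max(1, kˢ)/(2ᵏ k!)) (∑_{ℓ=0}^k C(k,ℓ)√(ℓ!))² < ∞`;
in particular (`s = 0`) `∑ₖ (1/(2ᵏ k!)) (∑_{ℓ=0}^k C(k,ℓ)√(ℓ!))² < ∞`. -/
theorem statement15 :
    (∀ s : ℕ, Summable (fun k : ℕ =>
      max 1 ((k : ℝ) ^ s) / ((2 : ℝ) ^ k * (Nat.factorial k : ℝ)) *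
        (∑ ℓ ∈ Finset.range (k + 1),
          (Nat.choose k ℓ : ℝ) * Real.sqrt (Nat.factorial ℓ)) ^ 2)) ∧
    Summable (fun k : ℕ =>
      (1 : ℝ) / ((2 : ℝ) ^ k * (Nat.factorial k : ℝ)) *
        (∑ ℓ ∈ Finset.range (k + 1),
          (Nat.choose k ℓ : ℝ) * Real.sqrt (Nat.factorial ℓ)) ^ 2) := by
  have main : ∀ s : ℕ, Summable (fun k : ℕ =>
      max 1 ((k : ℝ) ^ s) / ((2 : ℝ) ^ k * (Nat.factorial k : ℝ)) *
        (∑ ℓ ∈ Finset.range (k + 1),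
          (Nat.choose k ℓ : ℝ) * Real.sqrt (Nat.factorial ℓ)) ^ 2) := by
    intro s
    have hsum : Summable (fun k : ℕ =>
        Real.exp 3 * ((2 / 3 : ℝ) ^ k + (k : ℝ) ^ s * (2 / 3 : ℝ) ^ k)) := by
      refine Summable.mul_left _ (Summable.add ?_ ?_)
      · exact summable_geometric_of_lt_one (by norm_num) (by norm_num)
      · exact summable_pow_mul_geometric_of_norm_lt_one s (by rw [Real.norm_eq_abs, abs_of_nonneg (by norm_num)]; norm_num)
    refine Summable.of_nonneg_of_le (fun k => by positivity) (fun k => ?_) hsum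
    have hb := key k
    have hmax : max 1 ((k : ℝ) ^ s) ≤ 1 + (k : ℝ) ^ s := by
      have h0 : (0:ℝ) ≤ (k:ℝ)^s := by positivity
      apply max_le <;> linarith
    have hpos : (0:ℝ) < (2 : ℝ) ^ k * (Nat.factorial k : ℝ) := by positivity
    calc max 1 ((k : ℝ) ^ s) / ((2 : ℝ) ^ k * (Nat.factorial k : ℝ)) *
          (∑ ℓ ∈ Finset.range (k + 1), (Nat.choose k ℓ : ℝ) * Real.sqrt (Nat.factorial ℓ)) ^ 2
        ≤ (1 + (k : ℝ) ^ s) / ((2 : ℝ) ^ k * (Nat.factorial k : ℝ)) *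
          (Real.exp 3 * (Nat.factorial k : ℝ) * (4 / 3) ^ k) := by
          apply mul_le_mul (by gcongr) hb (by positivity) (by positivity)
      _ = Real.exp 3 * ((2 / 3 : ℝ) ^ k + (k : ℝ) ^ s * (2 / 3 : ℝ) ^ k) := by
          have h1 : (Nat.factorial k : ℝ) ≠ 0 := by positivity
          have h2 : (2 : ℝ) ^ k ≠ 0 := by positivity
          have h4 : (4:ℝ)^k = 2^k * 2^k := by rw [← mul_pow]; norm_num
          rw [div_pow, div_pow, h4]
          field_simp
  refine ⟨main, ?_⟩
  have := main 0
  simpa using this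
end

section
/- Consider data X_1, …, X_n where, for a subset O ⊂ {1,…,n} with |O| ≤ k and its complement I, the coordinates X_j for j ∈ I are independent N(θ, σ²) random variables and X_j = η_j is deterministic for j ∈ O, with arbitrary η_j ∈ ℝ. Suppose n/5 ≤ k < n/2. There exists a universal constant C > 0 such that for every δ ∈ (0,1) and all n sufficiently large depending only on δ: for every θ ∈ ℝ, every σ > 0, every such O and every η, P{ |median(X_1, …, X_n) − θ| > C·σ·√(log(e·n/(n−2k))) } ≤ δ. -/
open MeasureTheory ProbabilityTheory

/-- Coordinate law in Huber's deterministic contamination model: a point mass `δ_{η j}`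
for outlier coordinates `j ∈ O` and `N(θ, σ²)` for inlier coordinates. -/
noncomputable def huberCoord (θ σ : ℝ) {n : ℕ} (O : Finset (Fin n)) (η : Fin n → ℝ)
    (j : Fin n) : Measure ℝ :=
  if j ∈ O then Measure.dirac (η j) else gaussianReal θ (Real.toNNReal (σ ^ 2))

/-- The law on ℝⁿ of the contaminated sample. -/
noncomputable def huberModel (n : ℕ) (θ σ : ℝ) (O : Finset (Fin n)) (η : Fin n → ℝ) :
    Measure (Fin n → ℝ) :=
  Measure.pi (huberCoord θ σ O η)

/-- The sample median, taken as the `⌈n/2⌉`-th order statistic. -/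
noncomputable def sampleMedian (n : ℕ) (x : Fin n → ℝ) : ℝ :=
  sInf {t : ℝ | (n + 1) / 2 ≤ (Finset.univ.filter fun j => x j ≤ t).card}

section Aux

open Real
open scoped NNReal ENNReal Classical

set_option maxHeartbeats 1000000

lemma pdf_shift_upper (θ : ℝ) (v : ℝ≥0) (c x : ℝ) (hc : 0 ≤ c) (hx : θ + c ≤ x) :
    gaussianPDFReal θ v x ≤ Real.exp (-c^2/(2*v)) * gaussianPDFReal (θ+c) v x := by
  unfold gaussianPDFReal
  rw [mul_left_comm]
  apply mul_le_mul_of_nonneg_left _ (by positivity)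
  rw [← Real.exp_add, Real.exp_le_exp]
  rcases eq_or_ne v 0 with h | h
  · simp [h]
  · have hv : (0:ℝ) < v := lt_of_le_of_ne v.coe_nonneg (by exact_mod_cast Ne.symm h)
    rw [← add_div, div_le_div_iff_of_pos_right (by positivity)]
    nlinarith

lemma pdf_shift_lower (θ : ℝ) (v : ℝ≥0) (c x : ℝ) (hc : 0 ≤ c) (hx : x ≤ θ - c) :
    gaussianPDFReal θ v x ≤ Real.exp (-c^2/(2*v)) * gaussianPDFReal (θ-c) v x := by
  unfold gaussianPDFReal
  rw [mul_left_comm]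
  apply mul_le_mul_of_nonneg_left _ (by positivity)
  rw [← Real.exp_add, Real.exp_le_exp]
  rcases eq_or_ne v 0 with h | h
  · simp [h]
  · have hv : (0:ℝ) < v := lt_of_le_of_ne v.coe_nonneg (by exact_mod_cast Ne.symm h)
    rw [← add_div, div_le_div_iff_of_pos_right (by positivity)]
    nlinarith

lemma gauss_tail_piece (θ θ' : ℝ) (v : ℝ≥0) (hv : v ≠ 0) (c : ℝ) (s : Set ℝ)
    (hs : MeasurableSet s)
    (hbd : ∀ x ∈ s, gaussianPDFReal θ v x ≤ Real.exp (-c^2/(2*v)) * gaussianPDFReal θ' v x) :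
    gaussianReal θ v s ≤ ENNReal.ofReal (Real.exp (-c^2/(2*v))) := by
  rw [gaussianReal_of_var_ne_zero _ hv, withDensity_apply _ hs]
  calc ∫⁻ x in s, gaussianPDF θ v x
      ≤ ∫⁻ x in s, ENNReal.ofReal (Real.exp (-c^2/(2*v))) * gaussianPDF θ' v x := by
        refine setLIntegral_mono ((measurable_gaussianPDF θ' v).const_mul _) fun x hx => ?_
        rw [gaussianPDF, gaussianPDF, ← ENNReal.ofReal_mul (by positivity)]
        exact ENNReal.ofReal_le_ofReal (hbd x hx)
    _ = ENNReal.ofReal (Real.exp (-c^2/(2*v))) * ∫⁻ x in s, gaussianPDF θ' v x :=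
        lintegral_const_mul _ (measurable_gaussianPDF θ' v)
    _ ≤ ENNReal.ofReal (Real.exp (-c^2/(2*v))) * 1 := by
        gcongr
        rw [← lintegral_gaussianPDF_eq_one θ' hv]
        exact setLIntegral_le_lintegral _ _
    _ = _ := mul_one _

lemma gauss_tail (θ : ℝ) (v : ℝ≥0) (hv : v ≠ 0) (c : ℝ) (hc : 0 ≤ c) :
    gaussianReal θ v {x | c ≤ |x - θ|} ≤ ENNReal.ofReal (2 * Real.exp (-c^2/(2*v))) := by
  have hsub : {x : ℝ | c ≤ |x - θ|} ⊆ Set.Iic (θ - c) ∪ Set.Ici (θ + c) := by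
    intro x hx
    rcases le_abs.mp (Set.mem_setOf.mp hx) with h | h
    · right; simp only [Set.mem_Ici]; linarith
    · left; simp only [Set.mem_Iic]; linarith
  calc gaussianReal θ v {x | c ≤ |x - θ|}
      ≤ gaussianReal θ v (Set.Iic (θ - c) ∪ Set.Ici (θ + c)) := measure_mono hsub
    _ ≤ gaussianReal θ v (Set.Iic (θ - c)) + gaussianReal θ v (Set.Ici (θ + c)) :=
        measure_union_le _ _
    _ ≤ ENNReal.ofReal (Real.exp (-c^2/(2*v))) + ENNReal.ofReal (Real.exp (-c^2/(2*v))) := by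
        gcongr
        · exact gauss_tail_piece θ (θ-c) v hv c _ measurableSet_Iic
            (fun x hx => pdf_shift_lower θ v c x hc hx)
        · exact gauss_tail_piece θ (θ+c) v hv c _ measurableSet_Ici
            (fun x hx => pdf_shift_upper θ v c x hc hx)
    _ = ENNReal.ofReal (2 * Real.exp (-c^2/(2*v))) := by
        rw [← ENNReal.ofReal_add (by positivity) (by positivity)]; ring_nf

lemma count_bound {n : ℕ} (μ : Fin n → Measure ℝ) [∀ j, SigmaFinite (μ j)]
    [∀ j, IsProbabilityMeasure (μ j)]
    (A : Set ℝ) (I : Finset (Fin n)) (s : ℕ) (p : ℝ≥0∞)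
    (hp : ∀ j ∈ I, μ j A ≤ p) :
    Measure.pi μ {x | s ≤ (I.filter fun j => x j ∈ A).card} ≤ (I.card.choose s) * p ^ s := by
  have hsub : {x : Fin n → ℝ | s ≤ (I.filter fun j => x j ∈ A).card}
      ⊆ ⋃ S ∈ I.powersetCard s, {x : Fin n → ℝ | ∀ j ∈ S, x j ∈ A} := by
    intro x hx
    obtain ⟨S, hS1, hS2⟩ := Finset.exists_subset_card_eq (Set.mem_setOf.mp hx)
    have hmem : S ∈ I.powersetCard s :=
      Finset.mem_powersetCard.mpr ⟨hS1.trans (Finset.filter_subset _ _), hS2⟩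
    exact Set.mem_biUnion hmem fun j hj => (Finset.mem_filter.mp (hS1 hj)).2
  calc Measure.pi μ {x | s ≤ (I.filter fun j => x j ∈ A).card}
      ≤ ∑ S ∈ I.powersetCard s, Measure.pi μ {x : Fin n → ℝ | ∀ j ∈ S, x j ∈ A} :=
        (measure_mono hsub).trans (measure_biUnion_finset_le _ _)
    _ ≤ ∑ _S ∈ I.powersetCard s, p ^ s := by
        refine Finset.sum_le_sum fun S hS => ?_
        obtain ⟨hSI, hcard⟩ := Finset.mem_powersetCard.mp hS
        have hset : {x : Fin n → ℝ | ∀ j ∈ S, x j ∈ A}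
            = Set.pi Set.univ (fun j => if j ∈ S then A else Set.univ) := by
          ext x
          simp only [Set.mem_setOf_eq, Set.mem_pi, Set.mem_univ, forall_true_left]
          constructor
          · intro h j
            by_cases hj : j ∈ S <;> simp [hj, h j]
          · intro h j hj
            have := h j
            rwa [if_pos hj] at this
        rw [hset, Measure.pi_pi]
        have : ∀ j : Fin n, μ j (if j ∈ S then A else Set.univ)
            = if j ∈ S then μ j A else 1 := by
          intro j; by_cases hj : j ∈ S <;> simp [hj]
        rw [Finset.prod_congr rfl fun j _ => this j, Finset.prod_ite_mem, Finset.univ_inter]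
        calc ∏ j ∈ S, μ j A ≤ ∏ _j ∈ S, p :=
              Finset.prod_le_prod' fun j hj => hp j (hSI hj)
          _ = p ^ s := by rw [Finset.prod_const, hcard]
    _ = (I.card.choose s) * p ^ s := by
        rw [Finset.sum_const, Finset.card_powersetCard, nsmul_eq_mul]

lemma restrict_count {n k c : ℕ} (O : Finset (Fin n)) (hO : O.card ≤ k)
    (Q : Fin n → Prop) [DecidablePred Q]
    (hc : c ≤ (Finset.univ.filter Q).card) :
    c - k ≤ (Oᶜ.filter Q).card := by
  have hsub : Finset.univ.filter Q ⊆ (Oᶜ.filter Q) ∪ O := by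
    intro j hj
    by_cases hjO : j ∈ O
    · exact Finset.mem_union_right _ hjO
    · exact Finset.mem_union_left _ (Finset.mem_filter.mpr
        ⟨Finset.mem_compl.mpr hjO, (Finset.mem_filter.mp hj).2⟩)
  have := (Finset.card_le_card hsub).trans (Finset.card_union_le _ _)
  omega

lemma median_count {n k : ℕ} (hn : 1 ≤ n) (O : Finset (Fin n)) (hO : O.card ≤ k)
    (θ t : ℝ) (ht : 0 ≤ t) (x : Fin n → ℝ)
    (hx : t < |sampleMedian n x - θ|) :
    (n+1)/2 - k ≤ (Oᶜ.filter fun j => t ≤ |x j - θ|).card := by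
  set h := (n+1)/2 with hh
  have hj0 : Nonempty (Fin n) := ⟨⟨0, hn⟩⟩
  have huniv : (Finset.univ : Finset (Fin n)).Nonempty := Finset.univ_nonempty
  set S := {u : ℝ | h ≤ (Finset.univ.filter fun j => x j ≤ u).card} with hS
  have hmed : sampleMedian n x = sInf S := rfl
  have hhn : h ≤ n := by omega
  have hh1 : 1 ≤ h := by omega
  -- S is nonempty
  have hu0 : Finset.univ.sup' huniv x ∈ S := by
    have : (Finset.univ.filter fun j => x j ≤ Finset.univ.sup' huniv x) = Finset.univ := by
      refine Finset.filter_true_of_mem fun j _ => Finset.le_sup' x (Finset.mem_univ j)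
    simp only [hS, Set.mem_setOf_eq, this, Finset.card_univ, Fintype.card_fin]
    exact hhn
  have hSne : S.Nonempty := ⟨_, hu0⟩
  -- S is bounded below
  have hSbdd : BddBelow S := by
    refine ⟨Finset.univ.inf' huniv x, fun u hu => ?_⟩
    have hpos : 0 < (Finset.univ.filter fun j => x j ≤ u).card := lt_of_lt_of_le hh1 hu
    obtain ⟨j, hj⟩ := Finset.card_pos.mp hpos
    exact le_trans (Finset.inf'_le x (Finset.mem_univ j)) (Finset.mem_filter.mp hj).2
  rcases lt_abs.mp hx with hcase | hcase
  · -- sampleMedian > θ + t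
    have hnotin : θ + t ∉ S := by
      intro hin
      have := csInf_le hSbdd hin
      rw [← hmed] at this
      linarith
    have hlt : (Finset.univ.filter fun j => x j ≤ θ + t).card < h := by
      by_contra hcon
      exact hnotin (Set.mem_setOf.mpr (not_lt.mp hcon))
    have hcount := Finset.card_filter_add_card_filter_not
      (s := Finset.univ) (p := fun j => x j ≤ θ + t)
    rw [Finset.card_univ, Fintype.card_fin] at hcount
    have hge : h ≤ (Finset.univ.filter fun j => ¬ (x j ≤ θ + t)).card := by omega
    have hsub : (Finset.univ.filter fun j => ¬ (x j ≤ θ + t))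
        ⊆ Finset.univ.filter fun j => t ≤ |x j - θ| := by
      intro j hj
      have := (Finset.mem_filter.mp hj).2
      refine Finset.mem_filter.mpr ⟨Finset.mem_univ j, le_abs.mpr (Or.inl ?_)⟩
      push_neg at this
      linarith
    exact restrict_count O hO _ (le_trans hge (Finset.card_le_card hsub))
  · -- sampleMedian < θ - t
    have hex : ∃ u ∈ S, u < θ - t := by
      by_contra hcon
      push_neg at hcon
      have := le_csInf hSne hcon
      rw [← hmed] at this
      linarith
    obtain ⟨u, huS, hult⟩ := hex
    have hsub : (Finset.univ.filter fun j => x j ≤ u)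
        ⊆ Finset.univ.filter fun j => t ≤ |x j - θ| := by
      intro j hj
      have := (Finset.mem_filter.mp hj).2
      refine Finset.mem_filter.mpr ⟨Finset.mem_univ j, le_abs.mpr (Or.inr ?_)⟩
      linarith
    exact restrict_count O hO _ (le_trans huS (Finset.card_le_card hsub))

lemma ofReal_mul_pow (c s : ℕ) (q : ℝ) (hq0 : 0 ≤ q) :
    (c : ENNReal) * (ENNReal.ofReal q) ^ s = ENNReal.ofReal ((c : ℝ) * q ^ s) := by
  rw [ENNReal.ofReal_mul (by positivity), ENNReal.ofReal_pow hq0, ENNReal.ofReal_natCast]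

lemma pow_self_le_exp_mul_factorial (s : ℕ) :
    (s:ℝ)^s ≤ Real.exp s * s.factorial := by
  have h := Real.sum_le_exp_of_nonneg (x := (s:ℝ)) (by positivity) (s+1)
  have hterm : (s:ℝ)^s / s.factorial ≤ ∑ i ∈ Finset.range (s+1), (s:ℝ)^i / i.factorial := by
    refine Finset.single_le_sum (f := fun i => (s:ℝ)^i / i.factorial) ?_ ?_
    · intro i _; positivity
    · simp
  have := hterm.trans h
  rw [div_le_iff₀ (by positivity)] at this
  linarith

lemma numeric_bound {δ : ℝ} (hδ : 0 < δ) :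
    ∃ N : ℕ, 1 ≤ N ∧ ∀ n k : ℕ, N ≤ n → (k:ℝ) < (n:ℝ)/2 →
      (n.choose ((n+1)/2 - k) : ℝ)
        * (2 * (((n:ℝ) - 2*k)/(Real.exp 1 * n))^8) ^ ((n+1)/2 - k) ≤ δ := by
  obtain ⟨M, hM⟩ := exists_pow_lt_of_lt_one hδ (by norm_num : (1:ℝ)/2 < 1)
  refine ⟨max 1 (⌈2*M/δ⌉₊ + 1), le_max_left _ _, fun n k hNn hk => ?_⟩
  have hn1 : 1 ≤ n := le_trans (le_max_left _ _) hNn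
  have hnpos : (0:ℝ) < n := by exact_mod_cast hn1
  have h2k : 2*k < n := by
    have : (2*k:ℝ) < n := by push_cast; linarith
    exact_mod_cast this
  set s : ℕ := (n+1)/2 - k with hs
  set r : ℝ := (n:ℝ) - 2*k with hr
  have hrpos : 0 < r := by
    have : ((2*k:ℕ):ℝ) < n := by exact_mod_cast h2k
    push_cast at this; rw [hr]; linarith
  have hrn : r ≤ n := by
    rw [hr]; have : (0:ℝ) ≤ 2*k := by positivity
    linarith
  have hs1 : 1 ≤ s := by omega
  have hsr : r/2 ≤ (s:ℝ) := by
    have hnat : n ≤ 2*s + 2*k := by omega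
    have : (n:ℝ) ≤ 2*s + 2*k := by exact_mod_cast hnat
    rw [hr]; linarith
  have hspos : (0:ℝ) < s := by exact_mod_cast hs1
  have hepos : (0:ℝ) < Real.exp 1 := Real.exp_pos 1
  have he2 : (2:ℝ) ≤ Real.exp 1 := by
    have := Real.add_one_le_exp (1:ℝ); linarith
  set q : ℝ := 2 * (r/(Real.exp 1 * n))^8 with hq
  have hqpos : 0 < q := by rw [hq]; positivity
  set β : ℝ := 4 * (r/n)^7 / (Real.exp 1)^7 with hβ
  have hβpos : 0 < β := by rw [hβ]; positivity
  have hrn1 : r/(n:ℝ) ≤ 1 := by rw [div_le_one hnpos]; exact hrn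
  have hrnn : 0 ≤ r/(n:ℝ) := by positivity
  have he7 : (128:ℝ) ≤ (Real.exp 1)^7 := by
    calc (128:ℝ) = 2^7 := by norm_num
    _ ≤ (Real.exp 1)^7 := pow_le_pow_left₀ (by norm_num) he2 7
  have hβhalf : β ≤ 1/2 := by
    rw [hβ, div_le_iff₀ (by positivity)]
    have h7 : (r/n)^7 ≤ 1 := pow_le_one₀ hrnn hrn1
    nlinarith
  -- chain
  have hfact : (0:ℝ) < s.factorial := by exact_mod_cast s.factorial_pos
  have key : (s:ℝ)^s ≤ (Real.exp 1)^s * s.factorial := by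
    rw [Real.exp_one_pow]; exact pow_self_le_exp_mul_factorial s
  have h1 : (n.choose s : ℝ) ≤ (n:ℝ)^s / s.factorial := by
    exact_mod_cast Nat.choose_le_pow_div s n
  have h2 : (n:ℝ)^s / s.factorial ≤ (Real.exp 1 * n / s)^s := by
    rw [div_pow, mul_pow, div_le_div_iff₀ hfact (by positivity)]
    calc (n:ℝ)^s * (s:ℝ)^s ≤ (n:ℝ)^s * ((Real.exp 1)^s * s.factorial) :=
          mul_le_mul_of_nonneg_left key (by positivity)
      _ = (Real.exp 1)^s * (n:ℝ)^s * s.factorial := by ring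
  have chain1 : (n.choose s : ℝ) * q ^ s ≤ (Real.exp 1 * n * q / s) ^ s := by
    calc (n.choose s : ℝ) * q ^ s ≤ (Real.exp 1 * n / s)^s * q^s :=
          mul_le_mul_of_nonneg_right (h1.trans h2) (by positivity)
      _ = (Real.exp 1 * n * q / s) ^ s := by
          rw [← mul_pow]; congr 1; ring
  have heq : Real.exp 1 * n * q = β * (r/2) := by
    have hEpos := hepos
    have hnpos' := hnpos
    rw [hq, hβ]
    generalize Real.exp 1 = E at hEpos ⊢
    field_simp
    ring
  have chain2 : Real.exp 1 * n * q / s ≤ β := by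
    rw [div_le_iff₀ hspos, heq]
    exact mul_le_mul_of_nonneg_left hsr hβpos.le
  have chain3 : (n.choose s : ℝ) * q ^ s ≤ β ^ s :=
    chain1.trans (pow_le_pow_left₀ (by positivity) chain2 s)
  by_cases hcase : β ≤ δ
  · refine chain3.trans ?_
    calc β ^ s ≤ β ^ 1 := pow_le_pow_of_le_one hβpos.le (hβhalf.trans (by norm_num)) hs1
      _ = β := pow_one β
      _ ≤ δ := hcase
  · push_neg at hcase
    have hδrn : δ < r/n := by
      have h7 : (r/n)^7 ≤ r/n := by
        calc (r/n)^7 ≤ (r/n)^1 := pow_le_pow_of_le_one hrnn hrn1 (by norm_num)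
          _ = r/n := pow_one _
      have : β ≤ (r/n)^7 := by
        rw [hβ, div_le_iff₀ (by positivity)]
        nlinarith [pow_nonneg hrnn 7, he7]
      linarith
    have hNceil : (⌈2*M/δ⌉₊ + 1 : ℕ) ≤ n := le_trans (le_max_right _ _) hNn
    have hnM : 2*(M:ℝ)/δ < n := by
      have h1 : (2*(M:ℝ)/δ) ≤ ⌈2*M/δ⌉₊ := Nat.le_ceil _
      have h2 : ((⌈2*M/δ⌉₊ + 1 : ℕ):ℝ) ≤ n := by exact_mod_cast hNceil
      push_cast at h2; linarith
    have hMs : M ≤ s := by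
      have hrn2 : δ * (n:ℝ) < r := by
        have := (lt_div_iff₀ hnpos).mp hδrn
        linarith [mul_comm δ (n:ℝ)]
      have h2 : (M:ℝ) < δ * n / 2 := by
        rw [div_lt_iff₀ hδ] at hnM
        rw [lt_div_iff₀ (by norm_num : (0:ℝ) < 2)]
        linarith
      have h1 : (M:ℝ) < (s:ℝ) := by linarith
      exact_mod_cast h1.le
    refine chain3.trans ?_
    calc β ^ s ≤ (1/2:ℝ) ^ s := pow_le_pow_left₀ hβpos.le hβhalf s
      _ ≤ (1/2:ℝ) ^ M := pow_le_pow_of_le_one (by norm_num) (by norm_num) hMs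
      _ ≤ δ := hM.le

end Aux

section Main

open Real
open scoped NNReal ENNReal Classical

set_option maxHeartbeats 1000000

/-- Theorem (sample median in Huber's contamination model, `n/5 ≤ k < n/2`). -/
theorem statement16 :
    ∃ C : ℝ, 0 < C ∧
      ∀ δ : ℝ, δ ∈ Set.Ioo (0 : ℝ) 1 →
        ∃ N : ℕ, ∀ n : ℕ, N ≤ n → ∀ k : ℕ, (n : ℝ) / 5 ≤ k → (k : ℝ) < (n : ℝ) / 2 →
          ∀ θ σ : ℝ, 0 < σ → ∀ O : Finset (Fin n), O.card ≤ k → ∀ η : Fin n → ℝ,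
            huberModel n θ σ O η
              {x | C * σ * Real.sqrt (Real.log (Real.exp 1 * n / ((n : ℝ) - 2 * k)))
                < |sampleMedian n x - θ|}
              ≤ ENNReal.ofReal δ := by
  refine ⟨4, by norm_num, fun δ hδ => ?_⟩
  obtain ⟨hδ0, hδ1⟩ := hδ
  obtain ⟨N, hN1, hNb⟩ := numeric_bound hδ0
  refine ⟨N, fun n hNn k hk5 hk2 θ σ hσ O hO η => ?_⟩
  have hn1 : 1 ≤ n := hN1.trans hNn
  set r : ℝ := (n:ℝ) - 2*k with hrdef
  set L : ℝ := Real.log (Real.exp 1 * n / r) with hLdef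
  set t : ℝ := 4 * σ * Real.sqrt L with htdef
  have hnpos : (0:ℝ) < n := by exact_mod_cast hn1
  have hrpos : 0 < r := by rw [hrdef]; linarith
  have hrn : r ≤ (n:ℝ) := by
    have : (0:ℝ) ≤ 2*k := by positivity
    rw [hrdef]; linarith
  have hepos := Real.exp_pos 1
  have he1 : (1:ℝ) ≤ Real.exp 1 := by linarith [Real.add_one_le_exp (1:ℝ)]
  have hposfrac : 0 < Real.exp 1 * n / r := div_pos (by positivity) hrpos
  have hfrac : (1:ℝ) ≤ Real.exp 1 * n / r := by
    rw [le_div_iff₀ hrpos]; nlinarith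
  have hL0 : 0 ≤ L := by rw [hLdef]; exact Real.log_nonneg hfrac
  have ht0 : 0 ≤ t := by rw [htdef]; positivity
  set v : ℝ≥0 := Real.toNNReal (σ^2) with hvdef
  have hv : (v:ℝ) = σ^2 := Real.coe_toNNReal _ (sq_nonneg σ)
  have hvne : v ≠ 0 := by
    rw [hvdef, Ne, Real.toNNReal_eq_zero, not_le]
    positivity
  set q : ℝ := 2 * (r/(Real.exp 1 * n))^8 with hqdef
  have hq0 : 0 ≤ q := by rw [hqdef]; positivity
  have hexp : 2 * Real.exp (-t^2/(2*(v:ℝ))) = q := by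
    have h1 : -t^2/(2*(v:ℝ)) = -(((8:ℕ):ℝ)*L) := by
      rw [hv, htdef, mul_pow, mul_pow, Real.sq_sqrt hL0]
      push_cast
      field_simp
      ring
    have h2 : Real.exp (-(((8:ℕ):ℝ)*L)) = (r/(Real.exp 1*n))^8 := by
      rw [Real.exp_neg, Real.exp_nat_mul, hLdef, Real.exp_log hposfrac, ← inv_pow, inv_div]
    rw [h1, h2, hqdef]
  haveI hprob : ∀ j, IsProbabilityMeasure (huberCoord θ σ O η j) := fun j => by
    unfold huberCoord
    split_ifs
    · infer_instance
    · infer_instance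
  haveI hsf : ∀ j, SigmaFinite (huberCoord θ σ O η j) := fun j => inferInstance
  set A : Set ℝ := {u | t ≤ |u - θ|} with hAdef
  have hcoord : ∀ j ∈ Oᶜ, huberCoord θ σ O η j A ≤ ENNReal.ofReal q := by
    intro j hj
    have hjO : j ∉ O := Finset.mem_compl.mp hj
    have : huberCoord θ σ O η j = gaussianReal θ v := by
      rw [huberCoord, if_neg hjO, hvdef]
    rw [this]
    calc gaussianReal θ v A ≤ ENNReal.ofReal (2*Real.exp (-t^2/(2*(v:ℝ)))) :=
          gauss_tail θ v hvne t ht0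
      _ = ENNReal.ofReal q := by rw [hexp]
  set s : ℕ := (n+1)/2 - k with hsdef
  have hincl : {x : Fin n → ℝ | t < |sampleMedian n x - θ|}
      ⊆ {x : Fin n → ℝ | s ≤ (Oᶜ.filter fun j => x j ∈ A).card} := by
    intro x hx
    have h := median_count hn1 O hO θ t ht0 x hx
    have heqf : (Oᶜ.filter fun j => x j ∈ A) = (Oᶜ.filter fun j => t ≤ |x j - θ|) := by
      apply Finset.filter_congr
      intro j _
      simp [hAdef]
    rw [Set.mem_setOf_eq, heqf]
    exact h
  have hcard : Oᶜ.card.choose s ≤ n.choose s :=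
    Nat.choose_le_choose s ((Finset.card_le_univ _).trans_eq (by simp))
  have hnum : (n.choose s : ℝ) * q ^ s ≤ δ := by
    rw [hsdef, hqdef, hrdef]
    exact hNb n k hNn hk2
  calc huberModel n θ σ O η {x | t < |sampleMedian n x - θ|}
      ≤ Measure.pi (huberCoord θ σ O η)
          {x : Fin n → ℝ | s ≤ (Oᶜ.filter fun j => x j ∈ A).card} := measure_mono hincl
    _ ≤ (Oᶜ.card.choose s) * (ENNReal.ofReal q) ^ s :=
        count_bound (huberCoord θ σ O η) A Oᶜ s _ hcoord
    _ ≤ (n.choose s) * (ENNReal.ofReal q) ^ s :=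
        mul_le_mul_left (by exact_mod_cast hcard) _
    _ = ENNReal.ofReal ((n.choose s : ℝ) * q ^ s) := ofReal_mul_pow _ _ _ hq0
    _ ≤ ENNReal.ofReal δ := ENNReal.ofReal_le_ofReal hnum

end Main
end

section
/- Define the modulus of continuity ω(ε) := sup{ |θ₁ − θ₂|/σ : θ₁, θ₂ ∈ ℝ, σ > 0, dTV(N(θ₁, σ²), N(θ₂, σ²)) ≤ ε/(1−ε) }. Then for every ε ∈ [1/3, 1/2) (equivalently, whenever 2(1−2ε) ≤ 1−ε and ε < 1/2), ω(ε) ≥ √( 2·log( (1−ε)/(2(1−2ε)) ) ). -/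
/-!
Take the witness `N(0,1)`, `N(Δ,1)` with `Δ = √(2L)`, `L = log((1-ε)/(2(1-2ε)))`. Always
`dTV(P,Q) ≤ 1 - ∫ min(p,q)`, and the minimum of the two densities dominates `e^{-Δ²/4}/√2` times
the Gaussian density of variance `1/2` centred at `Δ/2`; hence `dTV ≤ 1 - e^{-L}/2 = ε/(1-ε)`.
Since `sSup` of a set of reals that is not bounded above is `0`, one also needs boundedness of
the ratios `|θ₁ - θ₂|/σ`: by Chebyshev, `(1 - dTV)(θ₁ - θ₂)² ≤ 8σ²`, and `ε/(1-ε) < 1`.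
-/

open MeasureTheory ProbabilityTheory

/-- Total variation distance between two measures on ℝ. -/
noncomputable def dTV (P Q : Measure ℝ) : ℝ :=
  ⨆ s : {s : Set ℝ // MeasurableSet s}, |(P s.1).toReal - (Q s.1).toReal|

/-- The modulus of continuity
`ω(ε) = sup{|θ₁ − θ₂|/σ : dTV(N(θ₁,σ²), N(θ₂,σ²)) ≤ ε/(1−ε)}`. -/
noncomputable def modCont (ε : ℝ) : ℝ :=
  sSup {r : ℝ | ∃ θ₁ θ₂ σ : ℝ, 0 < σ ∧ r = |θ₁ - θ₂| / σ ∧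
    dTV (gaussianReal θ₁ (Real.toNNReal (σ ^ 2))) (gaussianReal θ₂ (Real.toNNReal (σ ^ 2)))
      ≤ ε / (1 - ε)}

open Real Set
open scoped NNReal

lemma dTV_le {P Q : Measure ℝ} {c : ℝ}
    (h : ∀ s, MeasurableSet s → |(P s).toReal - (Q s).toReal| ≤ c) : dTV P Q ≤ c :=
  have : Nonempty {s : Set ℝ // MeasurableSet s} := ⟨⟨∅, .empty⟩⟩
  ciSup_le fun s ↦ h s.1 s.2

lemma le_dTV (P Q : Measure ℝ) [IsProbabilityMeasure P] [IsProbabilityMeasure Q] {s : Set ℝ}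
    (hs : MeasurableSet s) : |(P s).toReal - (Q s).toReal| ≤ dTV P Q := by
  refine le_ciSup (f := fun s : {s : Set ℝ // MeasurableSet s} ↦ |(P s.1).toReal - (Q s.1).toReal|)
    ⟨1, ?_⟩ ⟨s, hs⟩
  rintro _ ⟨t, rfl⟩
  exact abs_sub_le_of_nonneg_of_le ENNReal.toReal_nonneg measureReal_le_one
    ENNReal.toReal_nonneg measureReal_le_one

lemma abs_setIntegral_sub_le_one_sub_integral_min {α : Type*} [MeasurableSpace α] {μ : Measure α}
    {p q : α → ℝ} (hp : Integrable p μ) (hq : Integrable q μ) (hp₁ : ∫ x, p x ∂μ = 1)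
    (hq₁ : ∫ x, q x ∂μ = 1) (s : Set α) :
    |∫ x in s, p x ∂μ - ∫ x in s, q x ∂μ| ≤ 1 - ∫ x, min (p x) (q x) ∂μ := by
  have hm : Integrable (fun x ↦ min (p x) (q x)) μ := hp.inf hq
  have key : ∀ f : α → ℝ, Integrable f μ → ∫ x, f x ∂μ = 1 → (∀ x, min (p x) (q x) ≤ f x) →
      ∫ x in s, f x ∂μ - ∫ x in s, min (p x) (q x) ∂μ ≤ 1 - ∫ x, min (p x) (q x) ∂μ := by
    intro f hf hf₁ hmf
    rw [← integral_sub hf.integrableOn hm.integrableOn, ← hf₁, ← integral_sub hf hm]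
    exact setIntegral_le_integral (hf.sub hm) (ae_of_all _ fun x ↦ sub_nonneg.2 (hmf x))
  have hmp : ∫ x in s, min (p x) (q x) ∂μ ≤ ∫ x in s, p x ∂μ :=
    setIntegral_mono hm.integrableOn hp.integrableOn fun x ↦ min_le_left _ _
  have hmq : ∫ x in s, min (p x) (q x) ∂μ ≤ ∫ x in s, q x ∂μ :=
    setIntegral_mono hm.integrableOn hq.integrableOn fun x ↦ min_le_right _ _
  have := key p hp hp₁ fun x ↦ min_le_left _ _
  have := key q hq hq₁ fun x ↦ min_le_right _ _
  rw [abs_le]; constructor <;> linarith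

lemma dTV_gaussianReal_le_one_sub_integral_min (μ ν : ℝ) {v w : ℝ≥0} (hv : v ≠ 0) (hw : w ≠ 0) :
    dTV (gaussianReal μ v) (gaussianReal ν w)
      ≤ 1 - ∫ x, min (gaussianPDFReal μ v x) (gaussianPDFReal ν w x) := by
  refine dTV_le fun s _ ↦ ?_
  simp only [gaussianReal_apply_eq_integral _ hv, gaussianReal_apply_eq_integral _ hw,
    ENNReal.toReal_ofReal (integral_nonneg fun _ ↦ gaussianPDFReal_nonneg _ _ _)]
  exact abs_setIntegral_sub_le_one_sub_integral_min (integrable_gaussianPDFReal μ v)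
    (integrable_gaussianPDFReal ν w) (integral_gaussianPDFReal_eq_one μ hv)
    (integral_gaussianPDFReal_eq_one ν hw) s

lemma exp_mul_gaussianPDFReal_midpoint_le (μ ν : ℝ) (v : ℝ≥0) (x : ℝ) :
    rexp (-(μ - ν) ^ 2 / (4 * v)) * gaussianPDFReal ((μ + ν) / 2) (v / 2) x / √2
      ≤ gaussianPDFReal μ v x := by
  have hexp : -(μ - ν) ^ 2 / (4 * v) + -(x - (μ + ν) / 2) ^ 2 / (2 * (v / 2 : ℝ))
      = -(x - μ) ^ 2 / (2 * v) - (x - ν) ^ 2 / (2 * v) := by ring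
  have hsqrt : √(2 * π * (v / 2 : ℝ)) * √2 = √(2 * π * v) := by
    rw [← sqrt_mul (by positivity)]; ring_nf
  simp only [gaussianPDFReal, NNReal.coe_div, NNReal.coe_ofNat]
  calc rexp (-(μ - ν) ^ 2 / (4 * v)) * ((√(2 * π * (v / 2 : ℝ)))⁻¹
          * rexp (-(x - (μ + ν) / 2) ^ 2 / (2 * (v / 2 : ℝ)))) / √2
      = (√(2 * π * v))⁻¹ * rexp (-(x - μ) ^ 2 / (2 * v) - (x - ν) ^ 2 / (2 * v)) := by
        rw [← hexp, exp_add, ← hsqrt, mul_inv]; ring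
    _ ≤ (√(2 * π * v))⁻¹ * rexp (-(x - μ) ^ 2 / (2 * v)) := by gcongr; simp; positivity

lemma exp_div_sqrt_two_le_integral_min_gaussianPDFReal (μ ν : ℝ) {v : ℝ≥0} (hv : v ≠ 0) :
    rexp (-(μ - ν) ^ 2 / (4 * v)) / √2
      ≤ ∫ x, min (gaussianPDFReal μ v x) (gaussianPDFReal ν v x) := by
  have hν := fun x ↦ exp_mul_gaussianPDFReal_midpoint_le ν μ v x
  simp only [add_comm ν, ← neg_sub μ ν, neg_sq] at hν
  calc rexp (-(μ - ν) ^ 2 / (4 * v)) / √2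
      = ∫ x, rexp (-(μ - ν) ^ 2 / (4 * v)) * gaussianPDFReal ((μ + ν) / 2) (v / 2) x / √2 := by
        rw [integral_div, integral_const_mul,
          integral_gaussianPDFReal_eq_one _ (div_ne_zero hv two_ne_zero), mul_one]
    _ ≤ ∫ x, min (gaussianPDFReal μ v x) (gaussianPDFReal ν v x) :=
        integral_mono (((integrable_gaussianPDFReal _ _).const_mul _).div_const _)
          ((integrable_gaussianPDFReal μ v).inf (integrable_gaussianPDFReal ν v))
          fun x ↦ le_min (exp_mul_gaussianPDFReal_midpoint_le μ ν v x) (hν x)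

lemma dTV_gaussianReal_le (μ ν : ℝ) {v : ℝ≥0} (hv : v ≠ 0) :
    dTV (gaussianReal μ v) (gaussianReal ν v) ≤ 1 - rexp (-(μ - ν) ^ 2 / (4 * v)) / √2 :=
  (dTV_gaussianReal_le_one_sub_integral_min μ ν hv hv).trans
    (sub_le_sub_left (exp_div_sqrt_two_le_integral_min_gaussianPDFReal μ ν hv) 1)

lemma measureReal_ge_le_variance_div_sq (R : Measure ℝ) [IsProbabilityMeasure R]
    (hR : MemLp id 2 R) {t : ℝ} (ht : 0 < t) :
    R.real {x | t ≤ |x - R[id]|} ≤ Var[id; R] / t ^ 2 :=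
  ENNReal.toReal_le_of_le_ofReal (by have := variance_nonneg id R; positivity)
    (meas_ge_le_variance_div_sq hR ht)

lemma one_sub_dTV_mul_sq_sub_le (P Q : Measure ℝ) [IsProbabilityMeasure P]
    [IsProbabilityMeasure Q] (hP : MemLp id 2 P) (hQ : MemLp id 2 Q) :
    (1 - dTV P Q) * (P[id] - Q[id]) ^ 2 ≤ 4 * (Var[id; P] + Var[id; Q]) := by
  have hvar : 0 ≤ Var[id; P] + Var[id; Q] := add_nonneg (variance_nonneg _ _) (variance_nonneg _ _)
  rcases eq_or_ne (P[id] - Q[id]) 0 with hd | hd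
  · rw [hd, zero_pow two_ne_zero, mul_zero]; linarith
  set t := |P[id] - Q[id]| / 2
  have ht : 0 < t := by positivity
  have h2t : |P[id] - Q[id]| = 2 * t := by ring
  set A := {x : ℝ | t ≤ |x - Q[id]|}
  have hA : MeasurableSet A := measurableSet_le measurable_const (by fun_prop)
  have hAc : Aᶜ ⊆ {x | t ≤ |x - P[id]|} := by
    intro x hx
    have hx : |x - Q[id]| < t := not_le.1 hx
    have := abs_sub_le (P[id]) x (Q[id])
    rw [abs_sub_comm (P[id]) x] at this
    show t ≤ |x - P[id]|
    linarith
  have hPA : 1 - Var[id; P] / t ^ 2 ≤ P.real A := by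
    have := (measureReal_mono hAc).trans (measureReal_ge_le_variance_div_sq P hP ht)
    rw [probReal_compl_eq_one_sub hA] at this
    linarith
  have hQA := measureReal_ge_le_variance_div_sq Q hQ ht
  have hdTV := (le_abs_self _).trans (le_dTV P Q hA)
  have hsq : (P[id] - Q[id]) ^ 2 = 4 * t ^ 2 := by rw [← sq_abs, h2t]; ring
  calc (1 - dTV P Q) * (P[id] - Q[id]) ^ 2
      ≤ ((Var[id; P] + Var[id; Q]) / t ^ 2) * (4 * t ^ 2) := by
        rw [hsq]
        gcongr
        rw [add_div]
        simp only [measureReal_def] at hPA hQA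
        linarith
    _ = 4 * (Var[id; P] + Var[id; Q]) := by field_simp

lemma one_sub_dTV_gaussianReal_mul_sq_sub_le (θ₁ θ₂ : ℝ) (v : ℝ≥0) :
    (1 - dTV (gaussianReal θ₁ v) (gaussianReal θ₂ v)) * (θ₁ - θ₂) ^ 2 ≤ 8 * v := by
  have := one_sub_dTV_mul_sq_sub_le (gaussianReal θ₁ v) (gaussianReal θ₂ v)
    (memLp_id_gaussianReal 2) (memLp_id_gaussianReal 2)
  simp only [id_eq, integral_id_gaussianReal, variance_id_gaussianReal] at this
  linarith

lemma bddAbove_abs_sub_div_of_dTV_le {c : ℝ} (hc : c < 1) :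
    BddAbove {r : ℝ | ∃ θ₁ θ₂ σ : ℝ, 0 < σ ∧ r = |θ₁ - θ₂| / σ ∧
      dTV (gaussianReal θ₁ (Real.toNNReal (σ ^ 2))) (gaussianReal θ₂ (Real.toNNReal (σ ^ 2)))
        ≤ c} := by
  refine ⟨√(8 / (1 - c)), ?_⟩
  rintro _ ⟨θ₁, θ₂, σ, hσ, rfl, hdTV⟩
  have h := one_sub_dTV_gaussianReal_mul_sq_sub_le θ₁ θ₂ (σ ^ 2).toNNReal
  rw [Real.coe_toNNReal _ (sq_nonneg σ)] at h
  refine (le_abs_self _).trans (Real.abs_le_sqrt ?_)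
  rw [div_pow, sq_abs, div_le_div_iff₀ (by positivity) (by linarith)]
  nlinarith [sq_nonneg (θ₁ - θ₂)]

lemma dTV_gaussianReal_sqrt_le {L : ℝ} (hL : 0 ≤ L) :
    dTV (gaussianReal 0 1) (gaussianReal √(2 * L) 1) ≤ 1 - rexp (-L) / 2 := by
  refine (dTV_gaussianReal_le 0 _ one_ne_zero).trans (sub_le_sub_left ?_ 1)
  rw [zero_sub, neg_sq, sq_sqrt (by positivity), NNReal.coe_one]
  calc rexp (-L) / 2 ≤ rexp (-(2 * L) / (4 * 1)) / 2 := by gcongr; linarith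
    _ ≤ rexp (-(2 * L) / (4 * 1)) / √2 := by
        gcongr; exact sqrt_le_iff.2 ⟨by norm_num, by norm_num⟩

/-- Proposition: for `ε ∈ [1/3, 1/2)`, `ω(ε) ≥ √(2 log((1−ε)/(2(1−2ε))))`. -/
theorem statement17 (ε : ℝ) (h1 : 1 / 3 ≤ ε) (h2 : ε < 1 / 2) :
    Real.sqrt (2 * Real.log ((1 - ε) / (2 * (1 - 2 * ε)))) ≤ modCont ε := by
  set L := Real.log ((1 - ε) / (2 * (1 - 2 * ε)))
  have hε : 0 < 1 - 2 * ε := by linarith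
  have hε' : 0 < 1 - ε := by linarith
  have hL : 0 ≤ L := Real.log_nonneg (by rw [le_div_iff₀ (by positivity)]; linarith)
  have hc : ε / (1 - ε) = 1 - rexp (-L) / 2 := by
    rw [exp_neg, exp_log (by positivity)]
    field_simp
    ring
  refine le_csSup (bddAbove_abs_sub_div_of_dTV_le (by rw [hc]; exact sub_lt_self _ (by positivity)))
    ⟨0, √(2 * L), 1, one_pos, by rw [zero_sub, abs_neg, abs_of_nonneg (sqrt_nonneg _), div_one], ?_⟩
  rw [hc, one_pow, Real.toNNReal_one]
  exact dTV_gaussianReal_sqrt_le hL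
end
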